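/- arXiv:0908.4177 — 8 statements merged into one kernel-verified Lean document; each statement's English description precedes it below -/
import Mathlib

section
/- Let k ≥ 0 and n ≥ 2k+2 be integers, let t_1 < … < t_{n+1} be distinct reals, and set P := conv{μ_{2k+2}(t_i) : i ∈ [n+1]} ⊆ ℝ^{2k+2} and P' := conv{μ_{2k+1}(t_i) : i ∈ [n+1]} ⊆ ℝ^{2k+1}. Let F ⊆ [n+1] with |F| = k+1 be such that conv{μ_{2k+2}(t_i) : i ∈ F} is a face of P of dimension k. If this face is contained in some upper facet of P — that is, in a face of P of dimension 2k+1 of the form {x ∈ P : ⟨c,x⟩ = max_{y∈P}⟨c,y⟩} for some c ∈ ℝ^{2k+2} whose last coordinate is positive — then conv{μ_{2k+1}(t_i) : i ∈ F} is a face of P'. (Equivalently: a k-face of the cyclic polytope C_{2k+2}(n+1) which is not a k-face of C_{2k+1}(n+1) is contained only in lower facets of C_{2k+2}(n+1).) -/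
open Set

section PolytopeDefs

variable {E : Type*} [AddCommGroup E] [Module ℝ E]
variable {E' : Type*} [AddCommGroup E'] [Module ℝ E']

/-- A polytope: the convex hull of a finite set of points. -/
def IsPolytope (P : Set E) : Prop :=
  ∃ V : Finset E, P = convexHull ℝ (V : Set E)

/-- The dimension of a set of points: the dimension of its affine span. -/
noncomputable def polyDim (P : Set E) : ℕ :=
  Module.finrank ℝ (affineSpan ℝ P).direction

/-- A nonempty exposed face of `P`: a nonempty set of the form
`{x ∈ P | ⟨c,x⟩ = max_{y ∈ P} ⟨c,y⟩}` for a linear functional `c`. -/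
def IsFace (P F : Set E) : Prop :=
  F.Nonempty ∧ ∃ c : E →ₗ[ℝ] ℝ, F = {x ∈ P | ∀ y ∈ P, c y ≤ c x}

/-- The `k`-skeleton of `P`: its nonempty faces of dimension at most `k`. -/
def skel (k : ℕ) (P : Set E) : Set (Set E) :=
  {F | IsFace P F ∧ polyDim F ≤ k}

/-- The set of all nonempty faces of `P`. -/
def facesOf (P : Set E) : Set (Set E) :=
  {F | IsFace P F}

/-- Combinatorial equivalence of `k`-skeletons: the posets of faces of dimension
at most `k`, ordered by inclusion, are order-isomorphic. -/
def SkelEquiv (k : ℕ) (P : Set E) (Q : Set E') : Prop :=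
  Nonempty (skel k P ≃o skel k Q)

end PolytopeDefs

/-- The product of standard simplices `Δ_{n 0} × ⋯ × Δ_{n (r-1)}`. -/
def prodSimplex {r : ℕ} (n : Fin r → ℕ) : Set ((i : Fin r) → Fin (n i + 1) → ℝ) :=
  Set.univ.pi fun i => stdSimplex ℝ (Fin (n i + 1))

/-- `P` is `(k, n̄)`-prodsimplicial-neighborly: it is a polytope whose `k`-skeleton
is combinatorially equivalent to that of the product of simplices `Δ_n̄`. -/
def IsPSN {E : Type*} [AddCommGroup E] [Module ℝ E] (k : ℕ) {r : ℕ} (n : Fin r → ℕ)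
    (P : Set E) : Prop :=
  IsPolytope P ∧ SkelEquiv k P (prodSimplex n)

/-- `P` is `(k, n̄)`-projected-prodsimplicial-neighborly: it is `(k, n̄)`-PSN and moreover
the image under a linear map of a polytope whose poset of all nonempty faces is
order-isomorphic to that of `Δ_n̄`. -/
def IsPPSN {E : Type*} [AddCommGroup E] [Module ℝ E] (k : ℕ) {r : ℕ} (n : Fin r → ℕ)
    (P : Set E) : Prop :=
  IsPSN k n P ∧ ∃ (N : ℕ) (Q : Set (Fin N → ℝ)) (f : (Fin N → ℝ) →ₗ[ℝ] E),
    IsPolytope Q ∧ P = f '' Q ∧ Nonempty (facesOf Q ≃o facesOf (prodSimplex n))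

/-- The moment curve `μ_d : ℝ → ℝ^d`, `x ↦ (x, x², …, x^d)`. -/
noncomputable def moment (d : ℕ) (x : ℝ) : Fin d → ℝ :=
  fun j => x ^ (j.val + 1)

section AuxLemmas

open Polynomial

lemma hull_le_of_forall_le {ι : Type*} {E : Type*} [AddCommGroup E] [Module ℝ E]
    (v : ι → E) (c : E →ₗ[ℝ] ℝ) (M : ℝ) (h : ∀ i, c (v i) ≤ M) :
    ∀ y ∈ convexHull ℝ (Set.range v), c y ≤ M := by
  intro y hy
  have hsub : convexHull ℝ (Set.range v) ⊆ {x | c x ≤ M} :=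
    convexHull_min (by rintro _ ⟨i, rfl⟩; exact h i) (convex_halfSpace_le c.isLinear M)
  exact hsub hy

lemma face_eq_hull_argmax {ι : Type*} {E : Type*} [AddCommGroup E] [Module ℝ E]
    (v : ι → E) (c : E →ₗ[ℝ] ℝ) (M : ℝ)
    (hub : ∀ i, c (v i) ≤ M) (hex : ∃ i, c (v i) = M) :
    {x ∈ convexHull ℝ (Set.range v) | ∀ y ∈ convexHull ℝ (Set.range v), c y ≤ c x}
      = convexHull ℝ (v '' {i | c (v i) = M}) := by
  classical
  obtain ⟨i₀, hi₀⟩ := hex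
  apply Subset.antisymm
  · rintro x ⟨hx, hmax⟩
    have hxM : c x = M := by
      refine le_antisymm (hull_le_of_forall_le v c M hub x hx) ?_
      rw [← hi₀]
      exact hmax (v i₀) (subset_convexHull ℝ _ (mem_range_self i₀))
    rw [convexHull_range_eq_exists_affineCombination] at hx
    obtain ⟨s, w, hw₀, hw₁, rfl⟩ := hx
    rw [Finset.affineCombination_eq_linear_combination s v w hw₁] at hxM ⊢
    have hcx : ∑ i ∈ s, w i * c (v i) = M := by
      rw [← hxM]; rw [map_sum]; congr 1; ext i; rw [map_smul]; rfl
    have hzero : ∀ i ∈ s, w i * (M - c (v i)) = 0 := by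
      intro i hi
      have hsum : ∑ i ∈ s, w i * (M - c (v i)) = 0 := by
        simp only [mul_sub]
        rw [Finset.sum_sub_distrib, ← Finset.sum_mul, hw₁, hcx]; ring
      have hnn : ∀ i ∈ s, 0 ≤ w i * (M - c (v i)) := fun i hi =>
        mul_nonneg (hw₀ i hi) (sub_nonneg.2 (hub i))
      exact (Finset.sum_eq_zero_iff_of_nonneg hnn).1 hsum i hi
    set s' := s.filter (fun i => c (v i) = M) with hs'
    have hw0' : ∀ i ∈ s, i ∉ s' → w i = 0 := by
      intro i hi hi'
      have := hzero i hi
      rcases mul_eq_zero.1 this with h | h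
      · exact h
      · exact absurd (Finset.mem_filter.2 ⟨hi, by linarith [sub_eq_zero.1 h]⟩) hi'
    have hsum' : ∑ i ∈ s', w i = 1 := by
      rw [← hw₁]
      exact (Finset.sum_subset (Finset.filter_subset _ _)
        (fun i hi hi' => hw0' i hi hi')).symm ▸ rfl
    have hx' : ∑ i ∈ s, w i • v i = ∑ i ∈ s', w i • v i := by
      refine (Finset.sum_subset (Finset.filter_subset _ _) ?_).symm
      intro i hi hi'
      rw [hw0' i hi hi', zero_smul]
    rw [hx']
    have hcm : ∑ i ∈ s', w i • v i = s'.centerMass w v := by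
      rw [Finset.centerMass_eq_of_sum_1 _ _ hsum']
    rw [hcm]
    refine Finset.centerMass_mem_convexHull _ (fun i hi => hw₀ i (Finset.filter_subset _ _ hi))
      (by rw [hsum']; norm_num) ?_
    intro i hi
    exact mem_image_of_mem v (Finset.mem_filter.1 hi).2
  · intro x hx
    have hx1 : x ∈ convexHull ℝ (Set.range v) :=
      convexHull_mono (image_subset_range v _) hx
    have hxM : c x = M := by
      have hsub : convexHull ℝ (v '' {i | c (v i) = M}) ⊆ {x | c x = M} :=
        convexHull_min (by rintro _ ⟨i, hi, rfl⟩; exact hi) (convex_hyperplane c.isLinear M)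
      exact hsub hx
    exact ⟨hx1, fun y hy => by rw [hxM]; exact hull_le_of_forall_le v c M hub y hy⟩

lemma finrank_hull_image_le {ι : Type*} {E : Type*} [AddCommGroup E] [Module ℝ E]
    (v : ι → E) (S : Finset ι) (hS : S.Nonempty) :
    Module.finrank ℝ (affineSpan ℝ (convexHull ℝ (v '' ↑S))).direction ≤ S.card - 1 := by
  rw [affineSpan_convexHull, direction_affineSpan]
  have himg : v '' ↑S = Set.range (fun i : ↥S => v i.1) := by
    ext x; simp [Set.mem_image]
  rw [himg]
  have hcard : Fintype.card ↥S = (S.card - 1) + 1 := by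
    rw [Fintype.card_coe]
    have := hS.card_pos
    omega
  exact finrank_vectorSpan_range_le ℝ _ hcard

lemma moment_functional (d : ℕ) (g : ℝ[X]) (hdeg : g.natDegree ≤ d) :
    ∃ c : (Fin d → ℝ) →ₗ[ℝ] ℝ, ∀ x : ℝ, c (moment d x) = g.eval x - g.coeff 0 := by
  refine ⟨∑ j : Fin d, g.coeff (j.1 + 1) • (LinearMap.proj j : (Fin d → ℝ) →ₗ[ℝ] ℝ), ?_⟩
  intro x
  have hc : ∀ z : Fin d → ℝ,
      (∑ j : Fin d, g.coeff (j.1 + 1) • (LinearMap.proj j : (Fin d → ℝ) →ₗ[ℝ] ℝ)) z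
        = ∑ j : Fin d, g.coeff (j.1 + 1) * z j := by
    intro z
    simp [LinearMap.sum_apply, LinearMap.smul_apply, LinearMap.proj_apply, smul_eq_mul]
  rw [hc]
  rw [eval_eq_sum_range' (Nat.lt_succ_of_le hdeg)]
  rw [Finset.sum_range_succ']
  simp only [moment, pow_zero, mul_one]
  rw [Fin.sum_univ_eq_sum_range (fun j => g.coeff (j + 1) * x ^ (j + 1))]
  ring

lemma cert_face {m : ℕ} {d : ℕ} (t : Fin m → ℝ) (F : Finset (Fin m)) (hF : F.Nonempty)
    (g : ℝ[X]) (hdeg : g.natDegree ≤ d)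
    (h0 : ∀ i ∈ F, g.eval (t i) = 0) (hneg : ∀ j ∉ F, g.eval (t j) < 0) :
    IsFace (convexHull ℝ (Set.range fun i => moment d (t i)))
      (convexHull ℝ ((fun i => moment d (t i)) '' ↑F)) := by
  obtain ⟨c, hc⟩ := moment_functional d g hdeg
  obtain ⟨i₀, hi₀⟩ := hF
  constructor
  · exact ⟨moment d (t i₀), subset_convexHull ℝ _ (mem_image_of_mem _ hi₀)⟩
  refine ⟨c, ?_⟩
  have hub : ∀ i : Fin m, c (moment d (t i)) ≤ -g.coeff 0 := by
    intro i
    rw [hc]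
    by_cases hi : i ∈ F
    · rw [h0 i hi]; simp
    · have := hneg i hi; linarith
  have hex : ∃ i : Fin m, c (moment d (t i)) = -g.coeff 0 :=
    ⟨i₀, by rw [hc, h0 i₀ hi₀]; simp⟩
  have hseteq : {i : Fin m | c ((fun i => moment d (t i)) i) = -g.coeff 0} = ↑F := by
    ext j
    simp only [Set.mem_setOf_eq, Finset.mem_coe]
    constructor
    · intro hj
      by_contra hjF
      have h1 := hneg j hjF
      rw [hc] at hj; linarith
    · intro hj
      rw [hc, h0 j hj]; simp
  have hface := face_eq_hull_argmax (fun i => moment d (t i)) c (-g.coeff 0) hub hex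
  rw [hseteq] at hface
  exact hface.symm

lemma poly_factor {m : ℕ} (t : Fin m → ℝ) (htinj : Function.Injective t)
    (q : ℝ[X]) (D : ℕ) (hdeg : q.natDegree ≤ D) (hcoef : q.coeff D ≠ 0)
    (T : Finset (Fin m)) (hroots : ∀ i ∈ T, q.eval (t i) = 0) (hcard : D ≤ T.card) :
    T.card = D ∧ ∀ x, q.eval x = q.coeff D * ∏ i ∈ T, (x - t i) := by
  classical
  have hq0 : q ≠ 0 := fun h => hcoef (by simp [h])
  have hqdeg : q.natDegree = D := le_antisymm hdeg (le_natDegree_of_ne_zero hcoef)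
  have hsubroots : ∀ (r : ℝ[X]), r ≠ 0 → (∀ i ∈ T, r.eval (t i) = 0) →
      T.card ≤ r.natDegree := by
    intro r hr hre
    have himg : (T.image t).card = T.card := Finset.card_image_of_injective T htinj
    rw [← himg]
    apply Polynomial.card_le_degree_of_subset_roots
    intro z hz
    rw [Finset.mem_val, Finset.mem_image] at hz
    obtain ⟨i, hi, rfl⟩ := hz
    rw [Polynomial.mem_roots hr]
    exact hre i hi
  have hTcard : T.card = D := le_antisymm (hqdeg ▸ hsubroots q hq0 hroots) hcard
  set ρ : ℝ[X] := ∏ i ∈ T, (X - C (t i)) with hρ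
  have hρmonic : ρ.Monic := monic_prod_of_monic _ _ fun i _ => monic_X_sub_C _
  have hρdeg : ρ.natDegree = D := by
    rw [hρ, Polynomial.natDegree_prod _ _ (fun i _ => X_sub_C_ne_zero (t i))]
    simp [natDegree_X_sub_C, hTcard]
  set r : ℝ[X] := q - C (q.coeff D) * ρ with hr
  have hrcoef : r.coeff D = 0 := by
    rw [hr, Polynomial.coeff_sub, Polynomial.coeff_C_mul]
    rw [show ρ.coeff D = 1 from hρdeg ▸ hρmonic.coeff_natDegree]
    ring
  have hrdeg : r.natDegree ≤ D := by
    apply le_trans (natDegree_sub_le _ _)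
    simp only [max_le_iff]
    exact ⟨hdeg, le_trans (natDegree_C_mul_le _ _) hρdeg.le⟩
  have hreval : ∀ i ∈ T, r.eval (t i) = 0 := by
    intro i hi
    rw [hr]
    simp only [eval_sub, eval_mul, eval_C, hroots i hi, hρ, eval_prod, eval_sub, eval_X, eval_C]
    rw [Finset.prod_eq_zero hi (by ring)]
    ring
  have hr0 : r = 0 := by
    by_contra hrne
    have h1 : T.card ≤ r.natDegree := hsubroots r hrne hreval
    have h2 : r.natDegree ≠ D := by
      intro h
      apply hrne
      have : r.leadingCoeff = 0 := by rw [Polynomial.leadingCoeff, h, hrcoef]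
      exact Polynomial.leadingCoeff_eq_zero.1 this
    omega
  refine ⟨hTcard, fun x => ?_⟩
  have hqe : q = C (q.coeff D) * ρ := sub_eq_zero.1 (hr ▸ hr0)
  have heq : q.eval x = (C (q.coeff D) * ρ).eval x := by rw [← hqe]
  rw [heq, eval_mul, eval_C, hρ, eval_prod]
  congr 1
  exact Finset.prod_congr rfl (fun i _ => by simp)

end AuxLemmas

set_option maxHeartbeats 1600000

/-- A `k`-face of the cyclic polytope `C_{2k+2}(n+1)` that is contained
in some upper facet of `C_{2k+2}(n+1)` is also a `k`-face of `C_{2k+1}(n+1)` (equivalently: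
a `k`-face of `C_{2k+2}(n+1)` which is not a face of `C_{2k+1}(n+1)` lies only in lower
facets). -/
theorem statement1 (k n : ℕ) (hn : 2 * k + 2 ≤ n) (t : Fin (n + 1) → ℝ) (ht : StrictMono t)
    (F : Finset (Fin (n + 1))) (hcard : F.card = k + 1)
    (hface : IsFace (convexHull ℝ (Set.range fun i => moment (2 * k + 2) (t i)))
      (convexHull ℝ ((fun i => moment (2 * k + 2) (t i)) '' ↑F)))
    (hdim : polyDim (convexHull ℝ ((fun i => moment (2 * k + 2) (t i)) '' ↑F)) = k)
    (hupper : ∃ c : Fin (2 * k + 2) → ℝ,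
      0 < c ⟨2 * k + 1, by omega⟩ ∧
      polyDim {x ∈ convexHull ℝ (Set.range fun i => moment (2 * k + 2) (t i)) |
          ∀ y ∈ convexHull ℝ (Set.range fun i => moment (2 * k + 2) (t i)),
            ∑ j, c j * y j ≤ ∑ j, c j * x j} = 2 * k + 1 ∧
      convexHull ℝ ((fun i => moment (2 * k + 2) (t i)) '' ↑F) ⊆
        {x ∈ convexHull ℝ (Set.range fun i => moment (2 * k + 2) (t i)) |
          ∀ y ∈ convexHull ℝ (Set.range fun i => moment (2 * k + 2) (t i)),
            ∑ j, c j * y j ≤ ∑ j, c j * x j}) :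
    IsFace (convexHull ℝ (Set.range fun i => moment (2 * k + 1) (t i)))
      (convexHull ℝ ((fun i => moment (2 * k + 1) (t i)) '' ↑F)) := by
  classical
  open Polynomial in
  obtain ⟨c, hcpos, hdim2, hsub⟩ := hupper
  set v : Fin (n + 1) → (Fin (2 * k + 2) → ℝ) := fun i => moment (2 * k + 2) (t i) with hv
  set clin : (Fin (2 * k + 2) → ℝ) →ₗ[ℝ] ℝ :=
    ∑ j : Fin (2 * k + 2), c j • (LinearMap.proj j : (Fin (2 * k + 2) → ℝ) →ₗ[ℝ] ℝ) with hclin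
  have hclin_apply : ∀ z : Fin (2 * k + 2) → ℝ, clin z = ∑ j, c j * z j := by
    intro z
    simp [hclin, LinearMap.sum_apply, LinearMap.smul_apply, LinearMap.proj_apply, smul_eq_mul]
  simp only [← hclin_apply] at hdim2 hsub
  -- the maximizer set T
  obtain ⟨i₀, -, hi₀⟩ := Finset.exists_max_image Finset.univ (fun i => clin (v i))
    ⟨0, Finset.mem_univ _⟩
  set M : ℝ := clin (v i₀) with hM
  set T : Finset (Fin (n + 1)) := Finset.univ.filter (fun i => clin (v i) = M) with hT
  have hub : ∀ i, clin (v i) ≤ M := fun i => hi₀ i (Finset.mem_univ i)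
  have hi₀T : i₀ ∈ T := Finset.mem_filter.2 ⟨Finset.mem_univ _, rfl⟩
  have hTset : {i | clin (v i) = M} = (↑T : Set (Fin (n + 1))) := by
    ext i; simp [hT]
  have hfaceT := face_eq_hull_argmax v clin M hub ⟨i₀, rfl⟩
  rw [hTset] at hfaceT
  rw [hfaceT] at hdim2
  -- T has at least 2k+2 elements
  have hTcard_ge : 2 * k + 2 ≤ T.card := by
    have hb : polyDim (convexHull ℝ (v '' ↑T)) ≤ T.card - 1 :=
      finrank_hull_image_le v T ⟨i₀, hi₀T⟩
    omega
  -- F ⊆ T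
  have hFT : F ⊆ T := by
    intro i hi
    have hvi : v i ∈ convexHull ℝ ((fun i => moment (2 * k + 2) (t i)) '' ↑F) :=
      subset_convexHull ℝ _ ⟨i, hi, rfl⟩
    obtain ⟨-, h3⟩ := hsub hvi
    have h4 := h3 (v i₀) (subset_convexHull ℝ _ ⟨i₀, rfl⟩)
    exact Finset.mem_filter.2 ⟨Finset.mem_univ _, le_antisymm (hub i) h4⟩
  -- the facet polynomial
  set P : ℝ[X] := ∑ j : Fin (2 * k + 2), C (c j) * X ^ (j.1 + 1) with hP
  have hPdeg : P.natDegree ≤ 2 * k + 2 := by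
    apply Polynomial.natDegree_sum_le_of_forall_le
    intro j _
    refine le_trans (natDegree_C_mul_le _ _) ?_
    rw [natDegree_X_pow]
    omega
  have hPeval : ∀ x : ℝ, P.eval x = ∑ j : Fin (2 * k + 2), c j * x ^ (j.1 + 1) := by
    intro x
    rw [hP, Polynomial.eval_finset_sum]
    simp
  have hclin_v : ∀ i, clin (v i) = P.eval (t i) := by
    intro i
    rw [hclin_apply, hPeval]
    simp [hv, moment]
  set q : ℝ[X] := C M - P with hq
  have hqdeg : q.natDegree ≤ 2 * k + 2 := by
    refine le_trans (natDegree_sub_le _ _) ?_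
    simp only [max_le_iff]
    exact ⟨le_trans (natDegree_C _).le (by omega), hPdeg⟩
  have hPcoef : P.coeff (2 * k + 2) = c ⟨2 * k + 1, by omega⟩ := by
    rw [hP, Polynomial.finset_sum_coeff]
    rw [Finset.sum_eq_single (⟨2 * k + 1, by omega⟩ : Fin (2 * k + 2))]
    · simp [Polynomial.coeff_C_mul, Polynomial.coeff_X_pow]
    · intro j _ hj
      simp only [Polynomial.coeff_C_mul, Polynomial.coeff_X_pow, mul_ite, mul_one, mul_zero]
      rw [if_neg]
      intro h
      apply hj
      exact Fin.ext (show j.1 = 2 * k + 1 by omega)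
    · intro h
      exact absurd (Finset.mem_univ _) h
  have hqcoef : q.coeff (2 * k + 2) = -(c ⟨2 * k + 1, by omega⟩) := by
    rw [hq, Polynomial.coeff_sub, Polynomial.coeff_C, if_neg (by omega), hPcoef]
    ring
  have hqroots : ∀ i ∈ T, q.eval (t i) = 0 := by
    intro i hi
    have : clin (v i) = M := (Finset.mem_filter.1 hi).2
    rw [hq, Polynomial.eval_sub, Polynomial.eval_C, ← hclin_v, this, sub_self]
  obtain ⟨hTcard, hqfact⟩ := poly_factor t ht.injective q (2 * k + 2) hqdeg
    (by rw [hqcoef]; exact neg_ne_zero.2 hcpos.ne') T hqroots hTcard_ge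
  -- off T, the product is negative
  have hprodneg : ∀ j ∉ T, ∏ i ∈ T, (t j - t i) < 0 := by
    intro j hj
    have hne : clin (v j) ≠ M := fun h => hj (Finset.mem_filter.2 ⟨Finset.mem_univ _, h⟩)
    have h1 : 0 < q.eval (t j) := by
      rw [hq, Polynomial.eval_sub, Polynomial.eval_C, ← hclin_v]
      have := hub j
      cases lt_or_eq_of_le this with
      | inl h => linarith
      | inr h => exact absurd h hne
    rw [hqfact (t j), hqcoef] at h1
    by_contra h2
    push_neg at h2
    have h3 : -(c ⟨2 * k + 1, by omega⟩) * ∏ i ∈ T, (t j - t i) ≤ 0 :=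
      mul_nonpos_of_nonpos_of_nonneg (by linarith) h2
    linarith
  -- the top index belongs to T
  have hlastT : Fin.last n ∈ T := by
    by_contra hns
    have h1 := hprodneg _ hns
    have h2 : 0 < ∏ i ∈ T, (t (Fin.last n) - t i) := by
      apply Finset.prod_pos
      intro i hi
      have : i < Fin.last n := Fin.lt_last_iff_ne_last.2 (fun h => hns (h ▸ hi))
      have := ht this
      linarith
    linarith
  have hFne : F.Nonempty := Finset.card_pos.1 (by omega)
  -- build the certificate polynomial, by cases on whether the last index is in F
  by_cases hlF : Fin.last n ∈ F
  · -- use squares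
    set g : ℝ[X] := (∏ i ∈ F.erase (Fin.last n), (X - C (t i)) ^ 2) * (X - C (t (Fin.last n)))
      with hg
    have hcard_erase : (F.erase (Fin.last n)).card = k := by
      rw [Finset.card_erase_of_mem hlF, hcard]
      omega
    apply cert_face t F hFne g
    · refine le_trans Polynomial.natDegree_mul_le ?_
      have h1 : (∏ i ∈ F.erase (Fin.last n), (X - C (t i)) ^ 2).natDegree ≤ 2 * k := by
        refine le_trans (Polynomial.natDegree_prod_le _ _) ?_
        refine le_trans (Finset.sum_le_card_nsmul _ _ 2 ?_) ?_
        · intro i _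
          refine le_trans (Polynomial.natDegree_pow_le) ?_
          rw [natDegree_X_sub_C]
        · rw [hcard_erase]
          simp [mul_comm]
      have h2 : (X - C (t (Fin.last n))).natDegree ≤ 1 := (natDegree_X_sub_C _).le
      omega
    · intro i hi
      rw [hg, Polynomial.eval_mul]
      rcases eq_or_ne i (Fin.last n) with rfl | hne
      · simp
      · have hi' : i ∈ F.erase (Fin.last n) := Finset.mem_erase.2 ⟨hne, hi⟩
        rw [Polynomial.eval_prod, Finset.prod_eq_zero hi' (by simp), zero_mul]
    · intro j hj
      rw [hg, Polynomial.eval_mul, Polynomial.eval_prod]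
      apply mul_neg_of_pos_of_neg
      · apply Finset.prod_pos
        intro i hi
        simp only [Polynomial.eval_pow, Polynomial.eval_sub, Polynomial.eval_X,
          Polynomial.eval_C]
        refine sq_pos_iff.2 (sub_ne_zero.2 ?_)
        intro h
        exact hj ((ht.injective h) ▸ Finset.mem_of_mem_erase hi)
      · simp only [Polynomial.eval_sub, Polynomial.eval_X, Polynomial.eval_C]
        have hlt : j < Fin.last n := Fin.lt_last_iff_ne_last.2 (fun h => hj (h ▸ hlF))
        have := ht hlt
        linarith
  · -- use the facet certificate plus Lagrange interpolation
    set S : Finset (Fin (n + 1)) := T.erase (Fin.last n) with hS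
    have hFS : F ⊆ S := fun i hi =>
      Finset.mem_erase.2 ⟨fun h => hlF (h ▸ hi), hFT hi⟩
    have hScard : S.card = 2 * k + 1 := by
      rw [hS, Finset.card_erase_of_mem hlastT, hTcard]
      omega
    have hSlt : ∀ i ∈ S, i < Fin.last n := fun i hi =>
      Fin.lt_last_iff_ne_last.2 (Finset.mem_erase.1 hi).1
    set B : ℝ[X] := -∏ i ∈ S, (X - C (t i)) with hB
    have hBeval : ∀ x : ℝ, B.eval x = -∏ i ∈ S, (x - t i) := by
      intro x
      rw [hB, Polynomial.eval_neg, Polynomial.eval_prod]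
      congr 1
      exact Finset.prod_congr rfl (fun i _ => by simp)
    have hBdeg : B.natDegree ≤ 2 * k + 1 := by
      rw [hB, Polynomial.natDegree_neg]
      refine le_trans (Polynomial.natDegree_prod_le _ _) ?_
      refine le_trans (Finset.sum_le_card_nsmul _ _ 1 ?_) ?_
      · intro i _
        rw [natDegree_X_sub_C]
      · rw [hScard]; simp
    have hB0 : ∀ i ∈ S, B.eval (t i) = 0 := by
      intro i hi
      rw [hBeval, Finset.prod_eq_zero hi (by ring), neg_zero]
    have hBneg : ∀ j ∉ S, B.eval (t j) < 0 := by
      intro j hj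
      rw [hBeval, neg_lt_zero]
      rcases eq_or_ne j (Fin.last n) with rfl | hne
      · exact Finset.prod_pos (fun i hi => sub_pos.2 (ht (hSlt i hi)))
      · have hjT : j ∉ T := fun h => hj (Finset.mem_erase.2 ⟨hne, h⟩)
        have h1 := hprodneg j hjT
        have h2 : (∏ i ∈ S, (t j - t i)) * (t j - t (Fin.last n)) = ∏ i ∈ T, (t j - t i) := by
          rw [hS]
          exact Finset.prod_erase_mul T _ hlastT
        have h3 : t j - t (Fin.last n) < 0 :=
          sub_neg.2 (ht (Fin.lt_last_iff_ne_last.2 hne))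
        by_contra h4
        push_neg at h4
        have h5 : 0 ≤ (∏ i ∈ S, (t j - t i)) * (t j - t (Fin.last n)) := by
          have := mul_nonneg (neg_nonneg.2 h4) (neg_nonneg.2 h3.le)
          rw [neg_mul_neg] at this
          exact this
        rw [h2] at h5
        linarith
    have hinj : Set.InjOn t ↑S := Function.Injective.injOn ht.injective
    set e : ℝ[X] := Lagrange.interpolate S t (fun i => if i ∈ F then (0 : ℝ) else -1) with he'
    have he : ∀ i ∈ S, e.eval (t i) = if i ∈ F then (0 : ℝ) else -1 := fun i hi =>
      Lagrange.eval_interpolate_at_node _ hinj hi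
    have hedeg : e.natDegree ≤ 2 * k + 1 := by
      have hd := Lagrange.degree_interpolate_lt (s := S) (v := t)
        (fun i => if i ∈ F then (0 : ℝ) else -1) hinj
      rw [← he'] at hd
      rw [hScard] at hd
      exact Polynomial.natDegree_le_iff_degree_le.2 (le_of_lt hd)
    set lam : ℝ := 1 + ∑ j : Fin (n + 1),
      (if j ∈ S then 0 else |e.eval (t j)| / (-B.eval (t j))) with hlam'
    have hterm : ∀ j' : Fin (n + 1),
        0 ≤ (if j' ∈ S then (0 : ℝ) else |e.eval (t j')| / (-B.eval (t j'))) := by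
      intro j'
      split
      · exact le_refl _
      · exact div_nonneg (abs_nonneg _) (by linarith [hBneg j' ‹_›])
    have hlam : ∀ j ∉ S, 1 + |e.eval (t j)| / (-B.eval (t j)) ≤ lam := by
      intro j hj
      have hs := Finset.single_le_sum
        (f := fun j' => if j' ∈ S then (0 : ℝ) else |e.eval (t j')| / (-B.eval (t j')))
        (fun i _ => hterm i) (Finset.mem_univ j)
      simp only [if_neg hj] at hs
      rw [hlam']
      linarith
    set g : ℝ[X] := C lam * B + e with hg
    apply cert_face t F hFne g
    · refine le_trans (Polynomial.natDegree_add_le _ _) ?_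
      exact max_le (le_trans (natDegree_C_mul_le _ _) hBdeg) hedeg
    · intro i hi
      have hiS := hFS hi
      rw [hg, Polynomial.eval_add, Polynomial.eval_mul, Polynomial.eval_C, hB0 i hiS,
        he i hiS, if_pos hi]
      ring
    · intro j hj
      rw [hg, Polynomial.eval_add, Polynomial.eval_mul, Polynomial.eval_C]
      by_cases hjS : j ∈ S
      · rw [hB0 j hjS, he j hjS, if_neg hj]
        norm_num
      · have hb := hBneg j hjS
        have hl := hlam j hjS
        set bb : ℝ := -B.eval (t j) with hbb
        have hbb0 : 0 < bb := by rw [hbb]; linarith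
        have habs : e.eval (t j) ≤ |e.eval (t j)| := le_abs_self _
        have hkey : (1 + |e.eval (t j)| / bb) * bb ≤ lam * bb :=
          mul_le_mul_of_nonneg_right hl hbb0.le
        have hexp : (1 + |e.eval (t j)| / bb) * bb = bb + |e.eval (t j)| := by
          field_simp
        have hBe : B.eval (t j) = -bb := by rw [hbb]; ring
        rw [hBe]
        have h6 : lam * (-bb) = -(lam * bb) := by ring
        rw [h6]
        have h7 : bb + |Polynomial.eval (t j) e| ≤ lam * bb := by
          rw [← hexp]; exact hkey
        linarith
end

section
/- Let k ≥ 0, r ≥ 1 and n_1,…,n_r ≥ 1 be integers, and let I_1,…,I_r ⊂ ℝ be pairwise disjoint finite sets with |I_i| = n_i + 1 for each i. For a = (a_1,…,a_r) ∈ I_1×⋯×I_r define v_a := (Σ_{i∈[r]} a_i, Σ_{i∈[r]} a_i², …, Σ_{i∈[r]} a_i^{2k+2r}) ∈ ℝ^{2k+2r}. Then for every choice of nonempty subsets A_i ⊆ I_i (i ∈ [r]) with Σ_{i∈[r]}(|A_i| − 1) = k, there exist c ∈ ℝ^{2k+2r} and β ∈ ℝ such that ⟨c, v_a⟩ ≥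 β for all a ∈ I_1×⋯×I_r, with equality if and only if a ∈ A_1×⋯×A_r. In particular, each k-face of the product of simplices Δ_{n_1}×⋯×Δ_{n_r} corresponds to an exposed face of the polytope P := conv{v_a : a ∈ I_1×⋯×I_r} whose set of points among the v_a is exactly {v_a : a ∈ A_1×⋯×A_r}. -/
open Finset
open Polynomial

/-- Proposition `firstMinkowskiSum`. For pairwise disjoint index sets
`I_1, …, I_r ⊆ ℝ` with `|I_i| = n_i + 1`, and `v_a := (Σ a_i, Σ a_i², …, Σ a_i^{2k+2r})`,
every `k`-face `A_1 × ⋯ × A_r` of `Δ_{n_1} × ⋯ × Δ_{n_r}` is cut out by a linear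
inequality `⟨c, v_a⟩ ≥ β` that is tight exactly on `A_1 × ⋯ × A_r`. -/
theorem statement2 (k r : ℕ) (hr : 1 ≤ r) (n : Fin r → ℕ) (hn : ∀ i, 1 ≤ n i)
    (I : Fin r → Finset ℝ) (hcard : ∀ i, (I i).card = n i + 1)
    (hdisj : ∀ i j, i ≠ j → Disjoint (I i) (I j))
    (A : Fin r → Finset ℝ) (hA : ∀ i, A i ⊆ I i) (hAne : ∀ i, (A i).Nonempty)
    (hk : ∑ i, ((A i).card - 1) = k) :
    ∃ (c : Fin (2 * k + 2 * r) → ℝ) (β : ℝ),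
      (∀ a : Fin r → ℝ, (∀ i, a i ∈ I i) →
        β ≤ ∑ j, c j * (∑ i, (a i) ^ (j.val + 1))) ∧
      (∀ a : Fin r → ℝ, (∀ i, a i ∈ I i) →
        ((∑ j, c j * (∑ i, (a i) ^ (j.val + 1)) = β) ↔ ∀ i, a i ∈ A i)) := by
  classical
  set p : Polynomial ℝ := ∏ i, ∏ t ∈ A i, (X - C t) ^ 2 with hp
  -- sum of cards
  have hsum : ∑ i, (A i).card = k + r := by
    have : ∑ i, (A i).card = ∑ i, (((A i).card - 1) + 1) := by
      apply Finset.sum_congr rfl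
      intro i _
      have := (hAne i).card_pos
      omega
    rw [this, Finset.sum_add_distrib, hk]
    simp
  have hmon : ∀ i ∈ (univ : Finset (Fin r)), (∏ t ∈ A i, (X - C t) ^ 2 : ℝ[X]).Monic := by
    intro i _
    exact monic_prod_of_monic _ _ fun t _ => (monic_X_sub_C t).pow 2
  have hdeg : p.natDegree = 2 * k + 2 * r := by
    rw [hp, natDegree_prod_of_monic _ _ hmon]
    have : ∀ i ∈ (univ : Finset (Fin r)), (∏ t ∈ A i, (X - C t) ^ 2 : ℝ[X]).natDegree
        = 2 * (A i).card := by
      intro i _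
      rw [natDegree_prod_of_monic _ _ fun t _ => (monic_X_sub_C t).pow 2]
      simp [natDegree_pow, natDegree_X_sub_C, Finset.sum_const, mul_comm]
    rw [Finset.sum_congr rfl this, ← Finset.mul_sum, hsum]
    ring
  have hev : ∀ x : ℝ, p.eval x = ∏ i, ∏ t ∈ A i, (x - t) ^ 2 := by
    intro x; simp [hp, eval_prod]
  have hnon : ∀ x : ℝ, 0 ≤ p.eval x := by
    intro x
    rw [hev]
    exact Finset.prod_nonneg fun i _ => Finset.prod_nonneg fun t _ => sq_nonneg _
  have hzero : ∀ (i : Fin r) (x : ℝ), x ∈ I i → (p.eval x = 0 ↔ x ∈ A i) := by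
    intro i x hx
    rw [hev]
    constructor
    · intro h
      rw [Finset.prod_eq_zero_iff] at h
      obtain ⟨i', -, h⟩ := h
      rw [Finset.prod_eq_zero_iff] at h
      obtain ⟨t, ht, h⟩ := h
      have hxt : x = t := by
        have := pow_eq_zero_iff (n := 2) (by norm_num) |>.mp h
        linarith
      subst hxt
      by_cases hii : i = i'
      · exact hii ▸ ht
      · exact absurd (Finset.disjoint_left.mp (hdisj i i' hii) hx (hA i' ht)) (fun h => h)
    · intro h
      apply Finset.prod_eq_zero (Finset.mem_univ i)
      apply Finset.prod_eq_zero h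
      simp
  -- key evaluation identity
  have key : ∀ x : ℝ, ∑ j : Fin (2 * k + 2 * r), p.coeff (j.1 + 1) * x ^ (j.1 + 1)
      = p.eval x - p.coeff 0 := by
    intro x
    have h1 : p.eval x = ∑ j ∈ Finset.range (2 * k + 2 * r + 1), p.coeff j * x ^ j := by
      rw [eval_eq_sum_range' (by omega : p.natDegree < 2 * k + 2 * r + 1)]
    rw [h1, Finset.sum_range_succ']
    rw [Finset.sum_range fun j => p.coeff (j + 1) * x ^ (j + 1)]
    simp
  refine ⟨fun j => p.coeff (j.1 + 1), -(r * p.coeff 0), ?_, ?_⟩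
  all_goals
    intro a ha
    have hswap : ∑ j : Fin (2 * k + 2 * r), p.coeff (j.1 + 1) * (∑ i, a i ^ (j.1 + 1))
        = ∑ i, p.eval (a i) - r * p.coeff 0 := by
      simp_rw [Finset.mul_sum]
      rw [Finset.sum_comm, Finset.sum_congr rfl (fun i _ => key (a i)),
        Finset.sum_sub_distrib]
      simp [mul_comm]
  · rw [hswap]
    have h := Finset.sum_nonneg fun i (_ : i ∈ (univ : Finset (Fin r))) => hnon (a i)
    linarith
  · rw [hswap]
    have heq : ∑ i, p.eval (a i) - ↑r * p.coeff 0 = -(↑r * p.coeff 0) ↔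
        ∑ i, p.eval (a i) = 0 := by constructor <;> intro h <;> linarith
    rw [heq, Finset.sum_eq_zero_iff_of_nonneg fun i _ => hnon (a i)]
    constructor
    · intro h i
      exact (hzero i (a i) (ha i)).mp (h i (Finset.mem_univ i))
    · intro h i _
      exact (hzero i (a i) (ha i)).mpr (h i)
end

section
/- Let k ≥ 0, r ≥ 1 and n_1,…,n_r ≥ 1 be integers. Then there exist pairwise disjoint finite sets I_1,…,I_r ⊂ ℝ with |I_i| = n_i + 1 for all i, such that, writing w_a := (a_1, …, a_r, Σ_{i∈[r]} a_i², …, Σ_{i∈[r]} a_i^{2k+2}) ∈ ℝ^{2k+r+1} for a = (a_1,…,a_r) ∈ I_1×⋯×I_r, the following holds: for every choice of nonempty subsets A_i ⊆ I_i (i ∈ [r]) with Σ_{i∈[r]}(|A_i| − 1) = k, there exist c ∈ ℝ^{2k+r+1} and β ∈ ℝ with ⟨c, w_a⟩ ≤ β for all a ∈ I_1×⋯×I_r, and with equality if and only if a ∈ A_1×⋯×A_r. -/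
open Finset

/-- The point `w_a = (a_1, …, a_r, Σ a_i², Σ a_i³, …, Σ a_i^{2k+2}) ∈ ℝ^{2k+r+1}`. -/
noncomputable def wvec (k r : ℕ) (a : Fin r → ℝ) : Fin (2 * k + r + 1) → ℝ :=
  fun j => if h : j.val < r then a ⟨j.val, h⟩ else ∑ i, (a i) ^ (j.val - r + 2)

/-!
Put the `i`-th block `I_i` inside `[2i, 2i+1]` and fix a face `A_1 × ⋯ × A_r`. Vanishing to
second order on all `A_i` is `2(k + r)` linear conditions on `q = Σ_{m ≤ 2k} c_m X^{m+2}` and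
affine `ℓ_1, …, ℓ_r`, so some `q ≠ 0` has every `f_i = q + ℓ_i` of the form
`(∏_{α ∈ A_i} (X - α))² g_i`. Rolle's theorem applied twice on a block gives `q'' = f_i''` at
least `2|A_i| - 2` roots there, one more for each root of `g_i` in it. As `q'' ≠ 0` has degree
`≤ 2k = Σ (2|A_i| - 2)`, no `g_i` vanishes on its block and every root of `q''` lies in some
`[min A_i, max A_i]`. At `α ∈ A_i` the sign of `q''(α)` is that of `g_i(α)`, and `q''` keeps its
sign between consecutive blocks, so all `g_i` have a common sign `σ`. Hence `-σ f_i ≤ 0` on `I_i`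
with equality exactly on `A_i`; summing over `i` is the inequality `⟨c, w_a⟩ ≤ β` whose
coefficients are the slopes of the `ℓ_i` and the `c_m`.
-/

open Polynomial Lagrange

theorem sum_filter_le_of_pairwise_disjoint {ι α : Type*} [Fintype ι] (s : ι → Set α)
    [∀ i, DecidablePred (· ∈ s i)] (hs : Pairwise fun i j => Disjoint (s i) (s j))
    (m : Multiset α) : ∑ i, m.filter (· ∈ s i) ≤ m := by
  classical
  refine Multiset.le_iff_count.2 fun a => ?_
  rw [Multiset.count_sum']
  simp only [Multiset.count_filter, ← sum_filter, sum_const, smul_eq_mul]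
  refine (Nat.mul_le_mul_right _ (card_le_one.2 fun i hi j hj => ?_)).trans_eq (one_mul _)
  by_contra hij
  exact Set.disjoint_left.1 (hs hij) (mem_filter.1 hi).2 (mem_filter.1 hj).2

theorem sign_eq_of_forall_ne_zero {f : ℝ → ℝ} {x y : ℝ} (hf : ContinuousOn f (Set.uIcc x y))
    (h : ∀ z ∈ Set.uIcc x y, f z ≠ 0) : SignType.sign (f x) = SignType.sign (f y) := by
  by_contra hne
  suffices (0 : ℝ) ∈ Set.uIcc (f x) (f y) by
    obtain ⟨z, hz, hz0⟩ := intermediate_value_uIcc hf this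
    exact h z hz hz0
  rcases (h x Set.left_mem_uIcc).lt_or_gt with hx | hx <;>
    rcases (h y Set.right_mem_uIcc).lt_or_gt with hy | hy
  · exact absurd (by rw [sign_neg hx, sign_neg hy]) hne
  · exact Set.mem_uIcc.2 (Or.inl ⟨hx.le, hy.le⟩)
  · exact Set.mem_uIcc.2 (Or.inr ⟨hy.le, hx.le⟩)
  · exact absurd (by rw [sign_pos hx, sign_pos hy]) hne

theorem mul_pos_of_sign_eq {a b : ℝ} (h : SignType.sign a = SignType.sign b) (hb : b ≠ 0) :
    0 < b * a := by
  rcases hb.lt_or_gt with hb | hb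
  · rw [sign_neg hb, sign_eq_neg_one_iff] at h
    exact mul_pos_of_neg_of_neg hb h
  · rw [sign_pos hb, sign_eq_one_iff] at h
    exact mul_pos hb h

theorem pairwise_disjoint_Icc_of_lt {ι : Type*} [LinearOrder ι] {s t : ι → ℝ}
    (h : ∀ i j, i < j → t i < s j) :
    Pairwise fun i j => Disjoint (Set.Icc (s i) (t i)) (Set.Icc (s j) (t j)) := by
  intro i j hij
  refine Set.disjoint_left.2 fun x hx hx' => ?_
  rcases hij.lt_or_gt with hlt | hlt
  · linarith [h i j hlt, hx.2, hx'.1]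
  · linarith [h j i hlt, hx.1, hx'.2]

theorem le_or_le_of_mem_Icc {n : ℕ} {s t : Fin (n + 1) → ℝ} (hst : ∀ i j, i < j → t i < s j)
    (hs : ∀ i, s i ≤ t i) (m : Fin n) {l : Fin (n + 1)} {z : ℝ} (hz : z ∈ Set.Icc (s l) (t l)) :
    z ≤ t m.castSucc ∨ s m.succ ≤ z := by
  rcases le_or_gt l m.castSucc with hl | hl
  · rcases hl.lt_or_eq with hl | rfl
    · exact Or.inl (hz.2.trans ((hst _ _ hl).le.trans (hs _)))
    · exact Or.inl hz.2
  · rw [Fin.castSucc_lt_iff_succ_le] at hl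
    rcases hl.lt_or_eq with hl | rfl
    · exact Or.inr (((hs _).trans (hst _ _ hl).le).trans hz.1)
    · exact Or.inr hz.1

namespace Polynomial

theorem card_toFinset_roots_filter_le_card_sdiff_succ (p : ℝ[X]) {s : Set ℝ}
    (hs : s.OrdConnected) [DecidablePred (· ∈ s)] :
    (p.roots.filter (· ∈ s)).toFinset.card ≤
      (((derivative p).roots.filter (· ∈ s)).toFinset \
        (p.roots.filter (· ∈ s)).toFinset).card + 1 := by
  rcases eq_or_ne (derivative p) 0 with hp' | hp'
  · rw [eq_C_of_derivative_eq_zero hp']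
    simp
  have hp : p ≠ 0 := ne_of_apply_ne derivative (by rwa [derivative_zero])
  refine card_le_sdiff_of_interleaved fun x hx y hy hxy _ => ?_
  simp only [Multiset.mem_toFinset, Multiset.mem_filter, mem_roots hp] at hx hy
  obtain ⟨z, hz, hz'⟩ := exists_deriv_eq_zero hxy p.continuousOn (hx.1.trans hy.1.symm)
  refine ⟨z, ?_, hz⟩
  rw [Multiset.mem_toFinset, Multiset.mem_filter, mem_roots hp', IsRoot, ← p.deriv]
  exact ⟨hz', hs.out hx.2 hy.2 (Set.Ioo_subset_Icc_self hz)⟩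

theorem card_roots_filter_le_derivative (p : ℝ[X]) {s : Set ℝ} (hs : s.OrdConnected)
    [DecidablePred (· ∈ s)] :
    Multiset.card (p.roots.filter (· ∈ s)) ≤
      Multiset.card ((derivative p).roots.filter (· ∈ s)) + 1 := by
  set T := (p.roots.filter (· ∈ s)).toFinset
  set T' := ((derivative p).roots.filter (· ∈ s)).toFinset
  have hcount : ∀ (q : ℝ[X]) x, x ∈ s →
      (q.roots.filter (· ∈ s)).count x = q.rootMultiplicity x := fun q x hx => by
    rw [Multiset.count_filter_of_pos hx, count_roots]
  have hT : ∀ x ∈ T, x ∈ s := fun x hx => (Multiset.mem_filter.1 (Multiset.mem_toFinset.1 hx)).2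
  calc Multiset.card (p.roots.filter (· ∈ s))
      = ∑ x ∈ T, p.rootMultiplicity x := by
        rw [← Multiset.toFinset_sum_count_eq]
        exact sum_congr rfl fun x hx => hcount p x (hT x hx)
    _ = ∑ x ∈ T, (p.rootMultiplicity x - 1) + T.card := by
        rw [card_eq_sum_ones, ← sum_add_distrib]
        refine sum_congr rfl fun x hx => (Nat.sub_add_cancel ?_).symm
        rw [← hcount p x (hT x hx)]
        exact Multiset.count_pos.2 (Multiset.mem_toFinset.1 hx)
    _ ≤ ∑ x ∈ T, (derivative p).rootMultiplicity x + (∑ x ∈ T' \ T, 1 + 1) := by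
        rw [← card_eq_sum_ones]
        gcongr with x
        · exact rootMultiplicity_sub_one_le_derivative_rootMultiplicity _ _
        · exact card_toFinset_roots_filter_le_card_sdiff_succ p hs
    _ ≤ ∑ x ∈ T ∪ T', ((derivative p).roots.filter (· ∈ s)).count x + 1 := by
        rw [← add_assoc, ← union_sdiff_self_eq_union, sum_union disjoint_sdiff]
        gcongr with x hx x hx
        · rw [hcount _ x (hT x hx)]
        · exact Multiset.count_pos.2 (Multiset.mem_toFinset.1 (mem_sdiff.1 hx).1)
    _ = _ := by
        rw [← Multiset.toFinset_sum_count_eq, ← sum_subset subset_union_right]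
        intro x _ hx
        exact Multiset.count_eq_zero.2 fun h => hx (Multiset.mem_toFinset.2 h)

theorem sq_X_sub_C_dvd_of_isRoot_derivative {R : Type*} [CommRing R] [IsDomain R] {f : R[X]}
    {a : R} (h : f.IsRoot a) (h' : (derivative f).IsRoot a) : (X - C a) ^ 2 ∣ f := by
  rcases eq_or_ne f 0 with rfl | hf
  · exact dvd_zero _
  exact (le_rootMultiplicity_iff hf).1 ((one_lt_rootMultiplicity_iff_isRoot hf).2 ⟨h, h'⟩)

theorem nodal_sq_dvd_of_isRoot_derivative {R : Type*} [Field R] {f : R[X]} {A : Finset R}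
    (h : ∀ a ∈ A, f.IsRoot a ∧ (derivative f).IsRoot a) : nodal A id ^ 2 ∣ f := by
  rw [nodal_eq, ← prod_pow]
  refine prod_dvd_of_coprime (fun a _ b _ hab => ?_) fun a ha =>
    sq_X_sub_C_dvd_of_isRoot_derivative (h a ha).1 (h a ha).2
  exact (isCoprime_X_sub_C_of_isUnit_sub (sub_ne_zero.2 hab).isUnit).pow

theorem eval_derivative_derivative_sq_mul {R : Type*} [CommRing R] (g : R[X]) (a : R) :
    (derivative (derivative ((X - C a) ^ 2 * g))).eval a = 2 * g.eval a := by
  simp [derivative_mul, derivative_X_sub_C_sq]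

theorem eval_derivative_derivative_nodal_sq_mul {R : Type*} [Field R] [DecidableEq R]
    (A : Finset R) (g : R[X]) {a : R} (ha : a ∈ A) :
    (derivative (derivative (nodal A id ^ 2 * g))).eval a =
      2 * (nodal (A.erase a) id).eval a ^ 2 * g.eval a := by
  rw [nodal_eq_mul_nodal_erase ha, mul_pow, mul_assoc, id,
    eval_derivative_derivative_sq_mul, eval_mul, eval_pow, mul_assoc]

theorem sign_eval_derivative_derivative_nodal_sq_mul (A : Finset ℝ) (g : ℝ[X]) {a : ℝ}
    (ha : a ∈ A) :
    SignType.sign ((derivative (derivative (nodal A id ^ 2 * g))).eval a) =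
      SignType.sign (g.eval a) := by
  classical
  have hu : (nodal (A.erase a) id).eval a ≠ 0 :=
    eval_nodal_not_at_node fun b hb => (ne_of_mem_erase hb).symm
  rw [eval_derivative_derivative_nodal_sq_mul A g ha, sign_mul, sign_pos (by positivity), one_mul]

theorem sign_eval_eq_of_forall_isRoot {Q : ℝ[X]} {a b : ℝ} (hab : a ≤ b) (ha : Q.eval a ≠ 0)
    (hb : Q.eval b ≠ 0) (h : ∀ z, Q.IsRoot z → z ≤ a ∨ b ≤ z) :
    SignType.sign (Q.eval a) = SignType.sign (Q.eval b) := by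
  refine sign_eq_of_forall_ne_zero Q.continuousOn fun z hz hz0 => ?_
  rw [Set.uIcc_of_le hab] at hz
  rcases h z hz0 with hza | hbz
  · exact ha (le_antisymm hza hz.1 ▸ hz0)
  · exact hb (le_antisymm hz.2 hbz ▸ hz0)

theorem two_mul_card_add_card_roots_filter_le {s : Set ℝ} (hs : s.OrdConnected)
    [DecidablePred (· ∈ s)] {A : Finset ℝ} (hA : ↑A ⊆ s) {g : ℝ[X]}
    (hf : nodal A id ^ 2 * g ≠ 0) :
    2 * A.card + Multiset.card (g.roots.filter (· ∈ s)) ≤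
      Multiset.card ((derivative (derivative (nodal A id ^ 2 * g))).roots.filter (· ∈ s)) + 2 := by
  have hroots : (nodal A id ^ 2 * g).roots.filter (· ∈ s) =
      2 • A.val + g.roots.filter (· ∈ s) := by
    rw [roots_mul hf, roots_pow, nodal_eq, Multiset.filter_add, Multiset.filter_eq_self.2]
    · simp [roots_prod_X_sub_C]
    · intro x hx
      simp only [id, roots_prod_X_sub_C, Multiset.mem_nsmul] at hx
      exact hA hx.2
  have h1 := card_roots_filter_le_derivative (nodal A id ^ 2 * g) hs
  have h2 := card_roots_filter_le_derivative (derivative (nodal A id ^ 2 * g)) hs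
  rw [hroots, Multiset.card_add, Multiset.card_nsmul, card_val] at h1
  omega

end Polynomial

theorem eval_ne_zero_and_exists_mem_of_isRoot {ι : Type*} [Fintype ι] {A : ι → Finset ℝ}
    {g : ι → ℝ[X]} {Q : ℝ[X]} {J : ι → Set ℝ} (hJ : ∀ i, (J i).OrdConnected)
    (hJd : Pairwise fun i j => Disjoint (J i) (J j)) (hAJ : ∀ i, ↑(A i) ⊆ J i)
    (hQ : ∀ i, derivative (derivative (nodal (A i) id ^ 2 * g i)) = Q) (hQ0 : Q ≠ 0)
    (hdeg : Q.natDegree + 2 * Fintype.card ι ≤ 2 * ∑ i, (A i).card) :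
    (∀ i, ∀ x ∈ J i, (g i).eval x ≠ 0) ∧ ∀ x, Q.IsRoot x → ∃ i, x ∈ J i := by
  classical
  have hf : ∀ i, nodal (A i) id ^ 2 * g i ≠ 0 := fun i h => hQ0 (by rw [← hQ i, h]; simp)
  have hlocal : ∀ i, 2 * (A i).card + Multiset.card ((g i).roots.filter (· ∈ J i)) ≤
      Multiset.card (Q.roots.filter (· ∈ J i)) + 2 := fun i => by
    simpa only [hQ i] using two_mul_card_add_card_roots_filter_le (hJ i) (hAJ i) (hf i)
  have hle : ∑ i, Q.roots.filter (· ∈ J i) ≤ Q.roots :=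
    sum_filter_le_of_pairwise_disjoint J hJd Q.roots
  have hcard : Multiset.card Q.roots ≤ Q.natDegree := card_roots' Q
  have hsum := Multiset.card_le_card hle
  have htotal := sum_le_sum fun i (_ : i ∈ univ) => hlocal i
  simp only [sum_add_distrib, ← mul_sum, sum_const, card_univ, smul_eq_mul] at htotal
  rw [Multiset.card_sum] at hsum
  have hg : ∑ i, Multiset.card ((g i).roots.filter (· ∈ J i)) = 0 := by omega
  have heq : ∑ i, Q.roots.filter (· ∈ J i) = Q.roots :=
    Multiset.eq_of_le_of_card_le hle (by rw [Multiset.card_sum]; omega)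
  constructor
  · intro i x hx h0
    have hmem : x ∈ (g i).roots.filter (· ∈ J i) :=
      Multiset.mem_filter.2 ⟨(mem_roots fun h => hf i (by rw [h, mul_zero])).2 h0, hx⟩
    rw [sum_eq_zero_iff] at hg
    exact (Multiset.card_pos_iff_exists_mem.2 ⟨x, hmem⟩).ne' (hg i (mem_univ i))
  · intro x hx
    rw [← mem_roots hQ0, ← heq, Multiset.mem_sum] at hx
    obtain ⟨i, -, hi⟩ := hx
    exact ⟨i, (Multiset.mem_filter.1 hi).2⟩

theorem exists_mul_eval_pos {r : ℕ} {s t : Fin r → ℝ} (hst : ∀ i j, i < j → t i < s j)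
    {A : Fin r → Finset ℝ} (hA : ∀ i, (A i).Nonempty) (hAI : ∀ i, ↑(A i) ⊆ Set.Icc (s i) (t i))
    {g : Fin r → ℝ[X]} {Q : ℝ[X]}
    (hQ : ∀ i, derivative (derivative (nodal (A i) id ^ 2 * g i)) = Q) (hQ0 : Q ≠ 0)
    (hdeg : Q.natDegree + 2 * r ≤ 2 * ∑ i, (A i).card) :
    ∃ e : ℝ, ∀ i, ∀ x ∈ Set.Icc (s i) (t i), 0 < e * (g i).eval x := by
  set lo := fun i => (A i).min' (hA i)
  set hi := fun i => (A i).max' (hA i)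
  have hlo : ∀ i, lo i ∈ A i := fun i => min'_mem _ _
  have hhi : ∀ i, hi i ∈ A i := fun i => max'_mem _ _
  have hsep : ∀ i j, i < j → hi i < lo j := fun i j hij =>
    ((hAI i (hhi i)).2.trans_lt (hst i j hij)).trans_le (hAI j (hlo j)).1
  obtain ⟨hg, -⟩ := eval_ne_zero_and_exists_mem_of_isRoot (fun _ => Set.ordConnected_Icc)
    (pairwise_disjoint_Icc_of_lt hst) hAI hQ hQ0 (by simpa using hdeg)
  obtain ⟨-, hQroot⟩ := eval_ne_zero_and_exists_mem_of_isRoot (fun _ => Set.ordConnected_Icc)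
    (pairwise_disjoint_Icc_of_lt hsep) (fun i x hx => ⟨min'_le _ _ hx, le_max' _ _ hx⟩) hQ hQ0
    (by simpa using hdeg)
  have hQA : ∀ i, ∀ a ∈ A i, SignType.sign (Q.eval a) = SignType.sign ((g i).eval a) :=
    fun i a ha => hQ i ▸ sign_eval_derivative_derivative_nodal_sq_mul (A i) (g i) ha
  have hQA0 : ∀ i, ∀ a ∈ A i, Q.eval a ≠ 0 := fun i a ha h0 =>
    hg i a (hAI i ha) (sign_eq_zero_iff.1 ((hQA i a ha).symm.trans (h0 ▸ sign_zero)))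
  have hblock : ∀ i, ∀ x ∈ Set.Icc (s i) (t i), ∀ y ∈ Set.Icc (s i) (t i),
      SignType.sign ((g i).eval x) = SignType.sign ((g i).eval y) := fun i x hx y hy =>
    sign_eq_of_forall_ne_zero (g i).continuousOn fun z hz => hg i z (Set.uIcc_subset_Icc hx hy hz)
  cases r with
  | zero => exact ⟨1, fun i => i.elim0⟩
  | succ n =>
  have hchain : ∀ i, ∀ x ∈ Set.Icc (s i) (t i),
      SignType.sign ((g i).eval x) = SignType.sign ((g 0).eval (lo 0)) := by
    intro i
    induction i using Fin.induction with
    | zero => exact fun x hx => hblock 0 x hx (lo 0) (hAI 0 (hlo 0))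
    | succ m ih =>
      intro x hx
      have hgap : ∀ z, Q.IsRoot z → z ≤ hi m.castSucc ∨ lo m.succ ≤ z := fun z hz =>
        (hQroot z hz).elim fun _ hzl =>
          le_or_le_of_mem_Icc hsep (fun i => min'_le _ _ (hhi i)) m hzl
      calc SignType.sign ((g m.succ).eval x)
          = SignType.sign ((g m.succ).eval (lo m.succ)) := hblock _ x hx _ (hAI _ (hlo _))
        _ = SignType.sign (Q.eval (lo m.succ)) := (hQA _ _ (hlo _)).symm
        _ = SignType.sign (Q.eval (hi m.castSucc)) :=
          (sign_eval_eq_of_forall_isRoot (hsep _ _ m.castSucc_lt_succ).le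
            (hQA0 _ _ (hhi _)) (hQA0 _ _ (hlo _)) hgap).symm
        _ = SignType.sign ((g m.castSucc).eval (hi m.castSucc)) := hQA _ _ (hhi _)
        _ = _ := ih _ (hAI _ (hhi _))
  exact ⟨(g 0).eval (lo 0), fun i x hx =>
    mul_pos_of_sign_eq (hchain i x hx) (hg 0 _ (hAI 0 (hlo 0)))⟩

noncomputable def polyFromTwo (n : ℕ) : (Fin n → ℝ) →ₗ[ℝ] ℝ[X] :=
  ∑ m : Fin n, (LinearMap.proj m).smulRight (X ^ ((m : ℕ) + 2))

theorem polyFromTwo_apply {n : ℕ} (c : Fin n → ℝ) :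
    polyFromTwo n c = ∑ m, c m • X ^ ((m : ℕ) + 2) := by
  simp [polyFromTwo]

theorem eval_polyFromTwo {n : ℕ} (c : Fin n → ℝ) (x : ℝ) :
    (polyFromTwo n c).eval x = ∑ m, c m * x ^ ((m : ℕ) + 2) := by
  simp [polyFromTwo_apply, eval_finsetSum]

theorem coeff_polyFromTwo {n : ℕ} (c : Fin n → ℝ) (m : Fin n) :
    (polyFromTwo n c).coeff (m + 2) = c m := by
  simp [polyFromTwo_apply, coeff_X_pow, Fin.val_inj]

theorem natDegree_polyFromTwo_le {n : ℕ} (c : Fin n → ℝ) :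
    (polyFromTwo n c).natDegree ≤ n + 1 := by
  rw [polyFromTwo_apply]
  refine natDegree_sum_le_of_forall_le _ _ fun m _ => (natDegree_smul_le _ _).trans ?_
  rw [natDegree_X_pow]
  omega

theorem derivative_derivative_polyFromTwo_ne_zero {n : ℕ} {c : Fin n → ℝ} (hc : c ≠ 0) :
    derivative (derivative (polyFromTwo n c)) ≠ 0 := by
  obtain ⟨m, hm⟩ := Function.ne_iff.1 hc
  intro h
  have := congrArg (coeff · m) h
  simp only [coeff_derivative, coeff_zero] at this
  rw [coeff_polyFromTwo, mul_assoc] at this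
  exact hm ((mul_eq_zero.1 this).resolve_right (by positivity))

theorem exists_nodal_sq_dvd {ι : Type*} [Fintype ι] (n : ℕ) {A : ι → Finset ℝ}
    (hA : ∀ i, (A i).Nonempty) (hcard : 2 * ∑ i, (A i).card < n + 2 * Fintype.card ι) :
    ∃ c : Fin n → ℝ, c ≠ 0 ∧ ∃ μ ν : ι → ℝ,
      ∀ i, nodal (A i) id ^ 2 ∣ polyFromTwo n c + C (μ i) * X + C (ν i) := by
  let L : (Fin n → ℝ) × (ι → ℝ) × (ι → ℝ) →ₗ[ℝ] ((Σ i, A i) → ℝ × ℝ) :=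
    { toFun := fun v p =>
        ((polyFromTwo n v.1).eval (p.2 : ℝ) + v.2.1 p.1 * p.2 + v.2.2 p.1,
          (derivative (polyFromTwo n v.1)).eval (p.2 : ℝ) + v.2.1 p.1)
      map_add' := fun v w => by
        ext p <;> simp only [Prod.fst_add, Prod.snd_add, map_add, eval_add, Pi.add_apply] <;> ring
      map_smul' := fun a v => by
        ext p <;> simp only [Prod.smul_fst, Prod.smul_snd, map_smul, eval_smul, Pi.smul_apply,
          smul_eq_mul, RingHom.id_apply] <;> ring }
  have hdim : Module.finrank ℝ ((Σ i, A i) → ℝ × ℝ) <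
      Module.finrank ℝ ((Fin n → ℝ) × (ι → ℝ) × (ι → ℝ)) := by
    simp only [Module.finrank_pi_fintype, Module.finrank_prod, Module.finrank_self, sum_const,
      card_univ, Fintype.card_sigma, Fintype.card_coe, Fintype.card_fin, smul_eq_mul]
    omega
  obtain ⟨⟨c, μ, ν⟩, hker, hne⟩ :=
    Submodule.exists_mem_ne_zero_of_ne_bot (LinearMap.ker_ne_bot_of_finrank_lt (f := L) hdim)
  have hL : ∀ i, ∀ a ∈ A i, (polyFromTwo n c).eval a + μ i * a + ν i = 0 ∧
      (derivative (polyFromTwo n c)).eval a + μ i = 0 := fun i a ha => by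
    simpa [L, Prod.ext_iff] using congrFun (LinearMap.mem_ker.1 hker) ⟨i, a, ha⟩
  refine ⟨c, fun hc => hne ?_, μ, ν, fun i => nodal_sq_dvd_of_isRoot_derivative fun a ha => ?_⟩
  · have hμ : μ = 0 := funext fun i => by
      obtain ⟨a, ha⟩ := hA i
      simpa [hc] using (hL i a ha).2
    have hν : ν = 0 := funext fun i => by
      obtain ⟨a, ha⟩ := hA i
      simpa [hc, hμ] using (hL i a ha).1
    simp [hc, hμ, hν]
  · simpa [IsRoot] using hL i a ha

theorem exists_polyFromTwo_nonpos_eq_zero_iff {k r : ℕ} {s t : Fin r → ℝ}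
    (hst : ∀ i j, i < j → t i < s j) {A : Fin r → Finset ℝ} (hA : ∀ i, (A i).Nonempty)
    (hAI : ∀ i, ↑(A i) ⊆ Set.Icc (s i) (t i)) (hcard : ∑ i, (A i).card = k + r) :
    ∃ (c : Fin (2 * k + 1) → ℝ) (μ ν : Fin r → ℝ), ∀ i, ∀ x ∈ Set.Icc (s i) (t i),
      (polyFromTwo _ c).eval x + μ i * x + ν i ≤ 0 ∧
        ((polyFromTwo _ c).eval x + μ i * x + ν i = 0 ↔ x ∈ A i) := by
  obtain ⟨c, hc, μ, ν, hdvd⟩ := exists_nodal_sq_dvd (2 * k + 1) hA (by simp; omega)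
  choose g hg using hdvd
  have hQ : ∀ i, derivative (derivative (nodal (A i) id ^ 2 * g i)) =
      derivative (derivative (polyFromTwo _ c)) := fun i => by
    rw [← hg i]
    simp
  have hdeg : (derivative (derivative (polyFromTwo _ c))).natDegree ≤ 2 * k :=
    (natDegree_iterate_derivative _ 2).trans (by have := natDegree_polyFromTwo_le c; omega)
  obtain ⟨e, he⟩ := exists_mul_eval_pos hst hA hAI hQ
    (derivative_derivative_polyFromTwo_ne_zero hc) (by omega)
  refine ⟨(-e) • c, (-e) • μ, (-e) • ν, fun i x hx => ?_⟩
  have heval : (polyFromTwo _ ((-e) • c)).eval x + ((-e) • μ) i * x + ((-e) • ν) i =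
      -((nodal (A i) id).eval x ^ 2 * (e * (g i).eval x)) := by
    have := congrArg (eval x) (hg i)
    simp only [eval_add, eval_mul, eval_C, eval_X, eval_pow] at this
    simp only [map_smul, eval_smul, Pi.smul_apply, smul_eq_mul]
    linear_combination (-e) * this
  have hnodal : (nodal (A i) id).eval x = 0 ↔ x ∈ A i := by
    simp [eval_nodal, prod_eq_zero_iff, sub_eq_zero]
  have hpos := he i x hx
  rw [heval, neg_nonpos, neg_eq_zero, mul_eq_zero, or_iff_left hpos.ne',
    pow_eq_zero_iff two_ne_zero, hnodal]
  exact ⟨by positivity, Iff.rfl⟩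

noncomputable def wvecCoeff {k r : ℕ} (μ : Fin r → ℝ) (c : Fin (2 * k + 1) → ℝ) :
    Fin (2 * k + r + 1) → ℝ :=
  fun j => if h : j.val < r then μ ⟨j.val, h⟩ else c ⟨j.val - r, by omega⟩

theorem sum_wvecCoeff_mul_wvec {k r : ℕ} (μ : Fin r → ℝ) (c : Fin (2 * k + 1) → ℝ)
    (a : Fin r → ℝ) :
    ∑ j, wvecCoeff μ c j * wvec k r a j = ∑ i, ((polyFromTwo _ c).eval (a i) + μ i * a i) := by
  rw [← (finCongr (by omega : r + (2 * k + 1) = 2 * k + r + 1)).sum_comp, Fin.sum_univ_add]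
  simp only [wvecCoeff, wvec, finCongr_apply, Fin.val_cast, Fin.val_castAdd, Fin.is_lt,
    ↓reduceDIte, Fin.eta, Fin.val_natAdd, add_lt_iff_neg_left, not_lt_zero, add_tsub_cancel_left,
    mul_sum, eval_polyFromTwo, sum_add_distrib]
  rw [sum_comm, add_comm]

theorem exists_finset_card_subset_Icc {r : ℕ} (n : Fin r → ℕ) :
    ∃ I : Fin r → Finset ℝ, (∀ i, (I i).card = n i + 1) ∧
      ∀ i : Fin r, ↑(I i) ⊆ Set.Icc (2 * ((i : ℕ) : ℝ)) (2 * (i : ℕ) + 1) := by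
  refine ⟨fun i => (range (n i + 1)).image fun m : ℕ => 2 * (i : ℝ) + m / (n i + 1),
    fun i => ?_, fun i => ?_⟩
  · rw [card_image_of_injective _ fun a b hab => ?_, card_range]
    rw [add_right_inj, div_left_inj' (by positivity)] at hab
    exact_mod_cast hab
  · simp only [coe_image, coe_range, Set.image_subset_iff]
    intro m hm
    have : (m : ℝ) ≤ n i + 1 := by exact_mod_cast (Set.mem_Iio.1 hm).le
    exact ⟨le_add_of_nonneg_right (by positivity),
      add_le_add_right (div_le_one_of_le₀ this (by positivity)) _⟩

theorem statement4_general (k r : ℕ) (n : Fin r → ℕ) :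
    ∃ I : Fin r → Finset ℝ,
      (∀ i j, i ≠ j → Disjoint (I i) (I j)) ∧
      (∀ i, (I i).card = n i + 1) ∧
      (∀ A : Fin r → Finset ℝ, (∀ i, A i ⊆ I i) → (∀ i, (A i).Nonempty) →
        (∑ i, ((A i).card - 1) = k) →
        ∃ (c : Fin (2 * k + r + 1) → ℝ) (β : ℝ),
          (∀ a : Fin r → ℝ, (∀ i, a i ∈ I i) →
            ∑ j, c j * wvec k r a j ≤ β) ∧
          (∀ a : Fin r → ℝ, (∀ i, a i ∈ I i) →
            ((∑ j, c j * wvec k r a j = β) ↔ ∀ i, a i ∈ A i))) := by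
  obtain ⟨I, hcard, hI⟩ := exists_finset_card_subset_Icc n
  have hst : ∀ i j : Fin r, i < j → 2 * (i : ℝ) + 1 < 2 * j := fun i j hij => by
    have : (i : ℝ) + 1 ≤ j := by exact_mod_cast hij
    linarith
  refine ⟨I, fun i j hij => ?_, hcard, fun A hAI hA hk => ?_⟩
  · exact disjoint_coe.1 ((pairwise_disjoint_Icc_of_lt hst hij).mono (hI i) (hI j))
  have hsum : ∑ i, (A i).card = k + r := by
    calc ∑ i, (A i).card = ∑ i, ((A i).card - 1 + 1) :=
          sum_congr rfl fun i _ => (Nat.sub_add_cancel (hA i).card_pos).symm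
      _ = k + r := by simp [sum_add_distrib, hk]
  obtain ⟨c, μ, ν, hφ⟩ := exists_polyFromTwo_nonpos_eq_zero_iff hst hA
    (fun i => (coe_subset.2 (hAI i)).trans (hI i)) hsum
  have hval : ∀ a : Fin r → ℝ, ∑ j, wvecCoeff μ c j * wvec k r a j - (-∑ i, ν i) =
      ∑ i, ((polyFromTwo _ c).eval (a i) + μ i * a i + ν i) := fun a => by
    rw [sum_wvecCoeff_mul_wvec, sub_neg_eq_add, ← sum_add_distrib]
  have hnonpos : ∀ a : Fin r → ℝ, (∀ i, a i ∈ I i) → ∀ i ∈ univ,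
      (polyFromTwo _ c).eval (a i) + μ i * a i + ν i ≤ 0 :=
    fun a ha i _ => (hφ i (a i) (hI i (ha i))).1
  refine ⟨wvecCoeff μ c, -∑ i, ν i, fun a ha => ?_, fun a ha => ?_⟩
  · exact sub_nonpos.1 ((hval a).trans_le (sum_nonpos (hnonpos a ha)))
  · rw [← sub_eq_zero, hval, sum_eq_zero_iff_of_nonpos (hnonpos a ha)]
    simp only [mem_univ, true_implies]
    exact forall_congr' fun i => (hφ i (a i) (hI i (ha i))).2

/-- There exist pairwise disjoint index sets `I_1, …, I_r ⊆ ℝ` with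
`|I_i| = n_i + 1` such that every `k`-face `A_1 × ⋯ × A_r` of the product of simplices
yields a linear inequality `⟨c, w_a⟩ ≤ β` valid on all `w_a` and tight exactly on
`A_1 × ⋯ × A_r`. -/
theorem statement4 (k r : ℕ) (hr : 1 ≤ r) (n : Fin r → ℕ) (hn : ∀ i, 1 ≤ n i) :
    ∃ I : Fin r → Finset ℝ,
      (∀ i j, i ≠ j → Disjoint (I i) (I j)) ∧
      (∀ i, (I i).card = n i + 1) ∧
      (∀ A : Fin r → Finset ℝ, (∀ i, A i ⊆ I i) → (∀ i, (A i).Nonempty) →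
        (∑ i, ((A i).card - 1) = k) →
        ∃ (c : Fin (2 * k + r + 1) → ℝ) (β : ℝ),
          (∀ a : Fin r → ℝ, (∀ i, a i ∈ I i) →
            ∑ j, c j * wvec k r a j ≤ β) ∧
          (∀ a : Fin r → ℝ, (∀ i, a i ∈ I i) →
            ((∑ j, c j * wvec k r a j = β) ↔ ∀ i, a i ∈ A i))) :=
  statement4_general k r n
end

section
/- Let D ≥ 2 and m ≥ 1 be integers with 2m ≤ D, let a ∈ ℝ, and let f ∈ ℝ[X] be a monic polynomial of degree D. Then the following are equivalent: (i) there exist a monic polynomial Q ∈ ℝ[X] of degree D − 2m and real numbers s, ρ such that f = Q·(X − a)^{2m} + s·X + ρ; (ii) (X − a)^{2(m−1)} divides the second derivative f″, i.e. f″ = R·(X − a)^{2(m−1)} for some polynomial R ∈ ℝ[X] (which then necessarily has leading coefficient D(D−1)). -/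
/-!
Dividing `f` by `(X - a)^{2m}` writes `f = Q·(X - a)^{2m} + r` with `deg r < 2m`, and `Q` is monic of
degree `D - 2m`. Differentiating twice lowers the multiplicity of `a` by at most two, so
`(X - a)^{2m-2}` divides `f''` exactly when it divides `r''`. But `deg r'' < 2m - 2`, so this
happens exactly when `r'' = 0`, that is, when `r` is linear.
-/

open Polynomial

namespace Polynomial

variable {R : Type*}

theorem iterate_derivative_eq_zero_iff [Semiring R] [IsAddTorsionFree R] {p : R[X]} {k : ℕ}
    (hk : 0 < k) : derivative^[k] p = 0 ↔ p.natDegree < k := by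
  induction k, hk using Nat.le_induction generalizing p with
  | base => simp
  | succ k _ ih =>
    rw [Function.iterate_succ_apply, ih, natDegree_derivative]
    omega

variable [CommRing R] [IsDomain R]

theorem iterate_derivative_eq_zero_of_X_sub_C_pow_dvd {r : R[X]} {a : R} {n k : ℕ}
    (hr : r.degree < n) (hdvd : (X - C a) ^ (n - k) ∣ derivative^[k] r) :
    derivative^[k] r = 0 := by
  by_contra hne
  have hk : k ≤ r.natDegree := not_lt.1 (mt iterate_derivative_eq_zero hne)
  have hrn : r.natDegree < n :=
    (natDegree_lt_iff_degree_lt (by rintro rfl; simp at hne)).2 hr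
  refine hne (eq_zero_of_dvd_of_natDegree_lt hdvd ?_)
  rw [natDegree_pow, natDegree_X_sub_C, mul_one]
  exact (natDegree_iterate_derivative r k).trans_lt (by omega)

theorem exists_monic_mul_X_sub_C_pow_add_iff [IsAddTorsionFree R] {f : R[X]} (hf : f.Monic)
    (a : R) {n k : ℕ} (hk : 0 < k) (hn : n ≤ f.natDegree) :
    (∃ Q r : R[X], Q.Monic ∧ Q.natDegree = f.natDegree - n ∧ r.natDegree < k ∧
        f = Q * (X - C a) ^ n + r) ↔
      (X - C a) ^ (n - k) ∣ derivative^[k] f := by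
  constructor
  · rintro ⟨Q, r, -, -, hr, rfl⟩
    rw [iterate_map_add, iterate_derivative_eq_zero hr, add_zero]
    exact pow_sub_dvd_iterate_derivative_of_pow_dvd k (dvd_mul_left _ _)
  · intro hdvd
    set q := (X - C a) ^ n
    have hq : q.Monic := (monic_X_sub_C a).pow n
    have hqn : q.natDegree = n := by simp [q]
    have hrem : f %ₘ q = f - q * (f /ₘ q) := eq_sub_of_add_eq (modByMonic_add_div f q)
    have hdvd_rem : (X - C a) ^ (n - k) ∣ derivative^[k] (f %ₘ q) := by
      rw [hrem, iterate_derivative_sub]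
      exact dvd_sub hdvd (pow_sub_dvd_iterate_derivative_of_pow_dvd k (dvd_mul_right _ _))
    have hrem_deg : (f %ₘ q).degree < n := by
      simpa [degree_eq_natDegree hq.ne_zero, hqn] using degree_modByMonic_lt f hq
    refine ⟨f /ₘ q, f %ₘ q, ?_, ?_, ?_, ?_⟩
    · rw [Monic, leadingCoeff_divByMonic_of_monic hq, hf.leadingCoeff]
      rw [degree_eq_natDegree hq.ne_zero, degree_eq_natDegree hf.ne_zero, hqn]
      exact_mod_cast hn
    · rw [natDegree_divByMonic f hq, hqn]
    · exact (iterate_derivative_eq_zero_iff hk).1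
        (iterate_derivative_eq_zero_of_X_sub_C_pow_dvd hrem_deg hdvd_rem)
    · rw [hrem]
      ring

end Polynomial

theorem statement5_general (D m : ℕ) (hmD : 2 * m ≤ D) (a : ℝ)
    (f : ℝ[X]) (hf : f.Monic) (hdeg : f.natDegree = D) :
    (∃ (Q : ℝ[X]) (s ρ : ℝ), Q.Monic ∧ Q.natDegree = D - 2 * m ∧
        f = Q * (X - C a) ^ (2 * m) + C s * X + C ρ) ↔
    (∃ R : ℝ[X], derivative (derivative f) = R * (X - C a) ^ (2 * (m - 1))) := by
  subst hdeg
  have key := exists_monic_mul_X_sub_C_pow_add_iff hf a two_pos hmD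
  rw [show 2 * m - 2 = 2 * (m - 1) by omega, dvd_iff_exists_eq_mul_left] at key
  refine Iff.trans ?_ key
  constructor
  · rintro ⟨Q, s, ρ, hQ, hQdeg, rfl⟩
    exact ⟨Q, C s * X + C ρ, hQ, hQdeg, natDegree_linear_le.trans_lt one_lt_two, by ring⟩
  · rintro ⟨Q, r, hQ, hQdeg, hr, rfl⟩
    obtain ⟨s, ρ, rfl⟩ := exists_eq_X_add_C_of_natDegree_le_one (Nat.le_of_lt_succ hr)
    exact ⟨Q, s, ρ, hQ, hQdeg, by ring⟩

/-- For a monic polynomial `f` of degree `D ≥ 2m`, `f` has the form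
`Q·(X - a)^{2m} + s·X + ρ` with `Q` monic of degree `D - 2m` if and only if
`(X - a)^{2(m-1)}` divides `f''`. -/
theorem statement5 (D m : ℕ) (hD : 2 ≤ D) (hm : 1 ≤ m) (hmD : 2 * m ≤ D) (a : ℝ)
    (f : ℝ[X]) (hf : f.Monic) (hdeg : f.natDegree = D) :
    (∃ (Q : ℝ[X]) (s ρ : ℝ), Q.Monic ∧ Q.natDegree = D - 2 * m ∧
        f = Q * (X - C a) ^ (2 * m) + C s * X + C ρ) ↔
    (∃ R : ℝ[X], derivative (derivative f) = R * (X - C a) ^ (2 * (m - 1))) :=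
  statement5_general D m hmD a f hf hdeg
end

section
/- Let k ≥ 0 and r ≥ 1 be integers, let a_1,…,a_r be pairwise distinct real numbers, and let m_1,…,m_r ≥ 1 be integers with Σ_{i∈[r]}(m_i − 1) = k. Set g := (2k+2)(2k+1)·∏_{j∈[r]}(X − a_j)^{2(m_j − 1)} ∈ ℝ[X]. For each i ∈ [r], let f_i be the unique polynomial of degree 2k+2 with f_i″ = g and f_i(a_i) = f_i′(a_i) = 0. Then f_i(t) > 0 for all real t ≠ a_i; moreover f_i = Q_i·(X − a_i)^{2m_i} for a monic polynomial Q_i ∈ ℝ[X] of degree 2k+2−2m_i satisfying Q_i(t) > 0 for every t ∈ ℝ. -/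
open Polynomial Finset

/-- The polynomial `g = (2k+2)(2k+1) · ∏_j (X - a_j)^{2(m_j - 1)}`. -/
noncomputable def gcan (k : ℕ) {r : ℕ} (a : Fin r → ℝ) (m : Fin r → ℕ) : ℝ[X] :=
  C (((2 * k + 2) * (2 * k + 1) : ℕ) : ℝ) *
    ∏ j, (X - C (a j)) ^ (2 * (m j - 1))

/-- For pairwise distinct `a_1,…,a_r` and `Σ(m_i - 1) = k`, the polynomial
`f_i` of degree `2k+2` with `f_i'' = g`, `f_i(a_i) = f_i'(a_i) = 0` is positive away from
`a_i`, and factors as `f_i = Q_i·(X - a_i)^{2m_i}` with `Q_i` monic of degree `2k+2-2m_i`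
and everywhere positive. -/
theorem statement7 (k r : ℕ) (hr : 1 ≤ r) (a : Fin r → ℝ) (ha : Function.Injective a)
    (m : Fin r → ℕ) (hm : ∀ i, 1 ≤ m i) (hk : ∑ i, (m i - 1) = k)
    (i : Fin r) (f : ℝ[X]) (hdeg : f.natDegree = 2 * k + 2)
    (hf'' : derivative (derivative f) = gcan k a m)
    (hfa : f.eval (a i) = 0) (hf'a : (derivative f).eval (a i) = 0) :
    (∀ t : ℝ, t ≠ a i → 0 < f.eval t) ∧
    ∃ Q : ℝ[X], Q.Monic ∧ Q.natDegree = 2 * k + 2 - 2 * m i ∧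
      f = Q * (X - C (a i)) ^ (2 * m i) ∧ (∀ t : ℝ, 0 < Q.eval t) := by
  have hf0 : f ≠ 0 := fun h => by simp [h] at hdeg
  set P : ℝ[X] := ∏ j, (X - C (a j)) ^ (2 * (m j - 1)) with hP
  have hPmonic : P.Monic := monic_prod_of_monic _ _ fun j _ => (monic_X_sub_C _).pow _
  have hPdeg : P.natDegree = 2 * k := by
    rw [hP, natDegree_prod _ _ (fun j _ => ((monic_X_sub_C (a j)).pow _).ne_zero)]
    simp only [natDegree_pow, natDegree_X_sub_C, mul_one]
    rw [← Finset.mul_sum, hk]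
  have hcpos : (0:ℝ) < (((2*k+2)*(2*k+1) : ℕ) : ℝ) := by positivity
  -- g nonneg
  have hgnonneg : ∀ t : ℝ, 0 ≤ (gcan k a m).eval t := by
    intro t
    rw [gcan]
    simp only [eval_mul, eval_C, eval_prod, eval_pow, eval_sub, eval_X]
    refine mul_nonneg hcpos.le (Finset.prod_nonneg fun j _ => ?_)
    rw [mul_comm 2, pow_mul]
    positivity
  have hderivf' : ∀ t : ℝ, deriv (fun x => (derivative f).eval x) t = (gcan k a m).eval t := by
    intro t; rw [Polynomial.deriv, hf'']
  have hmono : Monotone fun t => (derivative f).eval t := by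
    refine monotone_of_deriv_nonneg (derivative f).differentiable (fun t => ?_)
    rw [hderivf' t]; exact hgnonneg t
  have hg0 : gcan k a m ≠ 0 := by
    rw [gcan, ← hP]; exact mul_ne_zero (C_ne_zero.mpr hcpos.ne') hPmonic.ne_zero
  have hf'ne : derivative (derivative f) ≠ 0 := hf'' ▸ hg0
  have hf'ncC : ∀ c : ℝ, derivative f ≠ C c := by
    intro c h; exact hf'ne (by rw [h, derivative_C])
  have key : ∀ x y : ℝ, x < y → (derivative f).eval x = (derivative f).eval y → False := by
    intro x y hxy heq
    have hconst : ∀ z ∈ Set.Icc x y, (derivative f).eval z = (derivative f).eval x :=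
      fun z hz => le_antisymm (heq ▸ hmono hz.2) (hmono hz.1)
    have hz : derivative f - C ((derivative f).eval x) = 0 := by
      apply eq_zero_of_infinite_isRoot
      refine Set.Infinite.mono ?_ (Set.Icc_infinite hxy)
      intro z hz
      simp only [Set.mem_setOf_eq, IsRoot, eval_sub, eval_C, hconst z hz, sub_self]
    exact hf'ncC _ (by linear_combination (norm := ring_nf) hz)
  have hinj : Function.Injective fun t => (derivative f).eval t := by
    intro x y hxy
    by_contra hne
    rcases lt_or_gt_of_ne hne with h | h
    · exact key x y h hxy
    · exact key y x h hxy.symm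
  have hstrict : StrictMono fun t => (derivative f).eval t := hmono.strictMono_of_injective hinj
  have hf'neg : ∀ t, t < a i → (derivative f).eval t < 0 := fun t ht => hf'a ▸ hstrict ht
  have hf'pos : ∀ t, a i < t → 0 < (derivative f).eval t := fun t ht => hf'a ▸ hstrict ht
  have hposR : ∀ t, a i < t → 0 < f.eval t := by
    intro t ht
    have hs : StrictMonoOn (fun x => f.eval x) (Set.Ici (a i)) := by
      refine strictMonoOn_of_deriv_pos (convex_Ici _) f.continuous.continuousOn ?_
      intro x hx
      rw [interior_Ici] at hx
      rw [Polynomial.deriv]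
      exact hf'pos x hx
    have := hs Set.self_mem_Ici (Set.mem_Ici.mpr ht.le) ht
    simpa [hfa] using this
  have hposL : ∀ t, t < a i → 0 < f.eval t := by
    intro t ht
    have hs : StrictAntiOn (fun x => f.eval x) (Set.Iic (a i)) := by
      refine strictAntiOn_of_deriv_neg (convex_Iic _) f.continuous.continuousOn ?_
      intro x hx
      rw [interior_Iic] at hx
      rw [Polynomial.deriv]
      exact hf'neg x hx
    have := hs (Set.mem_Iic.mpr ht.le) Set.self_mem_Iic ht
    simpa [hfa] using this
  have hpos : ∀ t : ℝ, t ≠ a i → 0 < f.eval t := fun t ht =>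
    ht.lt_or_gt.elim (hposL t) (hposR t)
  refine ⟨hpos, ?_⟩
  -- multiplicities
  have hPmult : P.rootMultiplicity (a i) = 2 * (m i - 1) := by
    rw [hP, ← Finset.mul_prod_erase univ _ (mem_univ i),
      rootMultiplicity_mul (mul_ne_zero ((monic_X_sub_C _).pow _).ne_zero
        (monic_prod_of_monic _ _ fun j _ => (monic_X_sub_C _).pow _).ne_zero),
      rootMultiplicity_X_sub_C_pow, rootMultiplicity_eq_zero, add_zero]
    simp only [IsRoot, eval_prod, eval_pow, eval_sub, eval_X, eval_C]
    intro hcontra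
    obtain ⟨j, hj, hj0⟩ := Finset.prod_eq_zero_iff.mp hcontra
    exact (Finset.mem_erase.mp hj).1
      (ha (sub_eq_zero.mp (pow_eq_zero_iff'.mp hj0).1)).symm
  have hgmult : (gcan k a m).rootMultiplicity (a i) = 2 * (m i - 1) := by
    rw [gcan, ← hP, rootMultiplicity_mul (mul_ne_zero (C_ne_zero.mpr hcpos.ne') hPmonic.ne_zero), rootMultiplicity_C, zero_add, hPmult]
  have hd0 : derivative f ≠ 0 := fun h => hf'ne (by rw [h, derivative_zero])
  have hfm1 : 0 < f.rootMultiplicity (a i) := (rootMultiplicity_pos hf0).2 hfa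
  have hfm2 : 0 < (derivative f).rootMultiplicity (a i) := (rootMultiplicity_pos hd0).2 hf'a
  have hchain : (derivative (derivative f)).rootMultiplicity (a i) = f.rootMultiplicity (a i) - 1 - 1 := by
    rw [derivative_rootMultiplicity_of_root hf'a, derivative_rootMultiplicity_of_root hfa]
  have hfmult : f.rootMultiplicity (a i) = 2 * m i := by
    rw [hf'', hgmult] at hchain
    have h1 : (derivative f).rootMultiplicity (a i) = f.rootMultiplicity (a i) - 1 :=
      derivative_rootMultiplicity_of_root hfa
    have := hm i
    omega
  obtain ⟨Q, hfQ, hndvd⟩ := f.exists_eq_pow_rootMultiplicity_mul_and_not_dvd hf0 (a i)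
  rw [hfmult] at hfQ
  have hQa : Q.eval (a i) ≠ 0 := fun h => hndvd (dvd_iff_isRoot.mpr h)
  -- f monic
  have hfmonic : f.Monic := by
    have hc := congrArg (fun p => coeff p (2*k)) hf''
    simp only [coeff_derivative] at hc
    rw [gcan, ← hP, coeff_C_mul] at hc
    have hP1 : P.coeff (2*k) = 1 := by
      have := hPmonic.coeff_natDegree; rwa [hPdeg] at this
    rw [hP1, mul_one] at hc
    have h2k : (2*k : ℕ) + 1 + 1 = 2*k+2 := by ring
    rw [h2k] at hc
    have hne : ((2*k:ℝ)+1+1) * ((2*k:ℝ)+1) ≠ 0 := by positivity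
    have h2 : f.coeff (2*k+2) * (((2*k:ℝ)+1+1) * ((2*k:ℝ)+1)) = 1 * (((2*k:ℝ)+1+1) * ((2*k:ℝ)+1)) := by
      push_cast at hc ⊢; linarith [hc]
    have hcf := mul_right_cancel₀ hne h2
    unfold Monic leadingCoeff
    rw [hdeg]
    exact hcf
  -- Q monic
  have hQmonic : Q.Monic := by
    have : ((X - C (a i)) ^ (2 * m i) * Q).Monic := hfQ ▸ hfmonic
    exact ((monic_X_sub_C _).pow _).of_mul_monic_left this
  have hQ0 : Q ≠ 0 := hQmonic.ne_zero
  have hQdeg : Q.natDegree = 2 * k + 2 - 2 * m i := by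
    have h1 : f.natDegree = 2 * m i + Q.natDegree := by
      rw [hfQ, natDegree_mul (((monic_X_sub_C _).pow _)).ne_zero hQ0,
        natDegree_pow, natDegree_X_sub_C, mul_one]
    rw [hdeg] at h1
    omega
  -- Q positivity
  have hQpos' : ∀ t : ℝ, t ≠ a i → 0 < Q.eval t := by
    intro t ht
    have h1 : (0:ℝ) < (t - a i) ^ (2 * m i) := by
      have h : t - a i ≠ 0 := sub_ne_zero.mpr ht
      rw [pow_mul]
      exact pow_pos (pow_two_pos_of_ne_zero h) _
    have h2 := hpos t ht
    rw [hfQ] at h2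
    simp only [eval_mul, eval_pow, eval_sub, eval_X, eval_C] at h2
    rcases mul_pos_iff.mp h2 with ⟨_, h⟩ | ⟨h, _⟩
    · exact h
    · linarith
  have hQai : 0 < Q.eval (a i) := by
    have htend : Filter.Tendsto (fun t => Q.eval t) (nhdsWithin (a i) {a i}ᶜ)
        (nhds (Q.eval (a i))) :=
      (Q.continuous.tendsto (a i)).mono_left nhdsWithin_le_nhds
    have h0 : 0 ≤ Q.eval (a i) := by
      refine ge_of_tendsto htend ?_
      filter_upwards [self_mem_nhdsWithin] with x hx
      exact (hQpos' x (Set.mem_compl_singleton_iff.mp hx)).le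
    exact h0.lt_of_ne (Ne.symm hQa)
  refine ⟨Q, hQmonic, hQdeg, by rw [hfQ]; ring, fun t => ?_⟩
  by_cases ht : t = a i
  · rw [ht]; exact hQai
  · exact hQpos' t ht
end

section
/- Fix integers k ≥ 0, r ≥ 1 and n_1,…,n_r ≥ 1 and let E, K and 𝒵 be as defined. Then the set of minimal non-faces of the simplicial complex K is exactly 𝒵; that is, a subset G ⊆ E is a minimal non-face of K if and only if |G_i| ≠ 1 for all i ∈ [r] and Σ_{i : G_i ≠ ∅}(|G_i| − 1) = k + 1. -/
open Finset

variable {r : ℕ} {n : Fin r → ℕ}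

/-- For `G ⊆ E = [n_1+1] ⊎ ⋯ ⊎ [n_r+1]` (modelled as a finite set of dependent pairs),
the cardinality `|G_i|` of its `i`-th component. -/
def compCard (G : Finset ((i : Fin r) × Fin (n i + 1))) (i : Fin r) : ℕ :=
  (G.filter fun x => x.1 = i).card

/-- The quantity `Σ_{i : G_i ≠ ∅} (|G_i| - 1)`. -/
def weight (G : Finset ((i : Fin r) × Fin (n i + 1))) : ℕ :=
  ∑ i ∈ univ.filter (fun i => compCard G i ≠ 0), (compCard G i - 1)

/-- `G` is a face of the simplicial complex `K` of index sets of faces of dimension at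
most `k` of `Δ_{n_1} × ⋯ × Δ_{n_r}`; equivalently, `Σ_{i : G_i ≠ ∅} (|G_i| - 1) ≤ k`. -/
def isFaceK (k : ℕ) (G : Finset ((i : Fin r) × Fin (n i + 1))) : Prop :=
  weight G ≤ k

/-- `G ∈ 𝒵`, i.e. `|G_i| ≠ 1` for all `i` and `Σ_{i : G_i ≠ ∅} (|G_i| - 1) = k + 1`. -/
def memZ (k : ℕ) (G : Finset ((i : Fin r) × Fin (n i + 1))) : Prop :=
  (∀ i, compCard G i ≠ 1) ∧ weight G = k + 1

lemma compCard_mono {G' G : Finset ((i : Fin r) × Fin (n i + 1))} (h : G' ⊆ G) (i : Fin r) :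
    compCard G' i ≤ compCard G i :=
  card_le_card (filter_subset_filter _ h)

lemma weight_add (G : Finset ((i : Fin r) × Fin (n i + 1))) :
    weight G + (univ.filter fun i => compCard G i ≠ 0).card = G.card := by
  have h1 : G.card = ∑ i ∈ univ, compCard G i :=
    card_eq_sum_card_fiberwise (f := Sigma.fst) (t := univ) (fun x _ => mem_univ _)
  rw [h1, ← sum_filter_ne_zero (s := univ) (f := fun i => compCard G i)]
  rw [weight, card_eq_sum_ones, ← sum_add_distrib]
  apply sum_congr rfl
  intro i hi
  simp only [mem_filter] at hi
  have : compCard G i ≠ 0 := hi.2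
  omega

lemma compCard_erase_self {G : Finset ((i : Fin r) × Fin (n i + 1))} {x} (hx : x ∈ G) :
    compCard (G.erase x) x.1 + 1 = compCard G x.1 := by
  have hxm : x ∈ G.filter (fun y => y.1 = x.1) := mem_filter.2 ⟨hx, rfl⟩
  rw [compCard, filter_erase, card_erase_of_mem hxm]
  have : 1 ≤ (G.filter (fun y => y.1 = x.1)).card := card_pos.2 ⟨x, hxm⟩
  rw [compCard]; omega

lemma compCard_erase_ne {G : Finset ((i : Fin r) × Fin (n i + 1))} {x} {i : Fin r}
    (hi : i ≠ x.1) : compCard (G.erase x) i = compCard G i := by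
  rw [compCard, filter_erase, erase_eq_of_notMem, compCard]
  simp only [mem_filter]
  rintro ⟨-, h⟩
  exact hi h.symm

lemma weight_erase_of_one {G : Finset ((i : Fin r) × Fin (n i + 1))} {x} (hx : x ∈ G)
    (h1 : compCard G x.1 = 1) : weight (G.erase x) = weight G := by
  have h0 : compCard (G.erase x) x.1 = 0 := by have := compCard_erase_self hx; omega
  have hS : (univ.filter fun i => compCard (G.erase x) i ≠ 0)
      = (univ.filter fun i => compCard G i ≠ 0).erase x.1 := by
    ext i
    simp only [mem_filter, mem_erase, mem_univ, true_and]
    by_cases h : i = x.1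
    · subst h; simp [h0]
    · rw [compCard_erase_ne h]; tauto
  have hW1 := weight_add G
  have hW2 := weight_add (G.erase x)
  rw [hS, card_erase_of_mem (by simp [h1])] at hW2
  have hc : (univ.filter fun i => compCard G i ≠ 0).card ≥ 1 :=
    card_pos.2 ⟨x.1, by simp [h1]⟩
  rw [card_erase_of_mem hx] at hW2
  have hGc : 1 ≤ G.card := card_pos.2 ⟨x, hx⟩
  omega

lemma weight_erase_of_two {G : Finset ((i : Fin r) × Fin (n i + 1))} {x} (hx : x ∈ G)
    (h2 : 2 ≤ compCard G x.1) : weight (G.erase x) + 1 = weight G := by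
  have h0 : compCard (G.erase x) x.1 ≠ 0 := by have := compCard_erase_self hx; omega
  have hS : (univ.filter fun i => compCard (G.erase x) i ≠ 0)
      = (univ.filter fun i => compCard G i ≠ 0) := by
    ext i
    simp only [mem_filter, mem_univ, true_and]
    by_cases h : i = x.1
    · subst h; constructor <;> intro _ <;> omega
    · rw [compCard_erase_ne h]
  have hW1 := weight_add G
  have hW2 := weight_add (G.erase x)
  rw [hS, card_erase_of_mem hx] at hW2
  have hGc : 1 ≤ G.card := card_pos.2 ⟨x, hx⟩
  omega

lemma weight_mono {G' G : Finset ((i : Fin r) × Fin (n i + 1))} (h : G' ⊆ G) :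
    weight G' ≤ weight G := by
  unfold weight
  calc ∑ i ∈ univ.filter (fun i => compCard G' i ≠ 0), (compCard G' i - 1)
      ≤ ∑ i ∈ univ.filter (fun i => compCard G i ≠ 0), (compCard G' i - 1) := by
        apply sum_le_sum_of_subset
        intro i hi
        simp only [mem_filter, mem_univ, true_and] at *
        have := compCard_mono h i; omega
    _ ≤ ∑ i ∈ univ.filter (fun i => compCard G i ≠ 0), (compCard G i - 1) :=
        sum_le_sum fun i _ => Nat.sub_le_sub_right (compCard_mono h i) 1

/-- The minimal non-faces of the complex `K` are exactly the elements
of `𝒵`: `G` is a non-face of `K` all of whose proper subsets are faces of `K` if and only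
if `|G_i| ≠ 1` for all `i` and `Σ_{i : G_i ≠ ∅} (|G_i| - 1) = k + 1`. -/
theorem statement12 (k r : ℕ) (hr : 1 ≤ r) (n : Fin r → ℕ) (hn : ∀ i, 1 ≤ n i)
    (G : Finset ((i : Fin r) × Fin (n i + 1))) :
    (¬ isFaceK k G ∧ ∀ G' ⊂ G, isFaceK k G') ↔ memZ k G := by
  constructor
  · rintro ⟨hnf, hmin⟩
    rw [isFaceK, not_le] at hnf
    have hall : ∀ i, compCard G i ≠ 1 := by
      intro i h1
      obtain ⟨x, hx⟩ := card_pos.1 (h1 ▸ Nat.one_pos : 0 < compCard G i)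
      rw [mem_filter] at hx
      obtain ⟨hxG, hxi⟩ := hx
      subst hxi
      have h1' := weight_erase_of_one hxG h1
      have := hmin _ (erase_ssubset hxG)
      rw [isFaceK] at this
      omega
    refine ⟨hall, ?_⟩
    obtain ⟨x, hxG⟩ : G.Nonempty := by
      rcases G.eq_empty_or_nonempty with h | h
      · subst h; simp [weight, compCard] at hnf
      · exact h
    have h2 : 2 ≤ compCard G x.1 := by
      have : 0 < compCard G x.1 := card_pos.2 ⟨x, mem_filter.2 ⟨hxG, rfl⟩⟩
      have := hall x.1; omega
    have hw := weight_erase_of_two hxG h2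
    have := hmin _ (erase_ssubset hxG)
    rw [isFaceK] at this
    omega
  · rintro ⟨hne, hw⟩
    refine ⟨by rw [isFaceK, hw]; omega, ?_⟩
    intro G' hss
    obtain ⟨x, hxG, hxG'⟩ := exists_of_ssubset hss
    have hsub : G' ⊆ G.erase x := subset_erase.2 ⟨hss.subset, hxG'⟩
    have h2 : 2 ≤ compCard G x.1 := by
      have : 0 < compCard G x.1 := card_pos.2 ⟨x, mem_filter.2 ⟨hxG, rfl⟩⟩
      have := hne x.1; omega
    have h3 := weight_erase_of_two hxG h2
    have h4 := weight_mono hsub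
    rw [isFaceK]; omega
end

section
/- Let k ≥ 0 and n̄ = (n_1,…,n_r) with r ≥ 1 and n_i ≥ 1 for all i. If k ≥ ⌊(Σ_{i∈[r]} n_i)/2⌋, then every (k,n̄)-PPSN polytope has dimension at least Σ_{i∈[r]} n_i; in other words, there is no (k,n̄)-PPSN polytope of dimension smaller than that of Δ_{n̄} itself. -/
open Set

namespace S14

/-! ### Generalities about faces of polytopes -/

variable {E : Type*} [AddCommGroup E] [Module ℝ E]

theorem face_subset {P F : Set E} (hF : IsFace P F) : F ⊆ P := by
  obtain ⟨-, c, rfl⟩ := hF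
  exact fun x hx => hx.1

theorem face_convex {P F : Set E} (hP : Convex ℝ P) (hF : IsFace P F) : Convex ℝ F := by
  obtain ⟨-, c, rfl⟩ := hF
  intro x hx y hy a b ha hb hab
  refine ⟨hP hx.1 hy.1 ha hb hab, fun w hw => ?_⟩
  have h1 := hx.2 w hw
  have h2 := hy.2 w hw
  calc c w = a * c w + b * c w := by rw [← add_mul, hab, one_mul]
  _ ≤ a * c x + b * c y := by
      apply add_le_add <;> apply mul_le_mul_of_nonneg_left <;> assumption
  _ = c (a • x + b • y) := by simp [map_add, map_smul, smul_eq_mul]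

theorem face_inter {P F G : Set E} (hF : IsFace P F) (hG : IsFace P G)
    (hne : (F ∩ G).Nonempty) : IsFace P (F ∩ G) := by
  obtain ⟨p0, hp0⟩ := hne
  obtain ⟨-, c1, rfl⟩ := hF
  obtain ⟨-, c2, rfl⟩ := hG
  refine ⟨⟨p0, hp0⟩, c1 + c2, ?_⟩
  ext x
  constructor
  · rintro ⟨⟨hxP, hx1⟩, -, hx2⟩
    exact ⟨hxP, fun y hy => add_le_add (hx1 y hy) (hx2 y hy)⟩
  · rintro ⟨hxP, hx⟩
    have h1 : c1 x ≤ c1 p0 := hp0.1.2 x hxP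
    have h2 : c2 x ≤ c2 p0 := hp0.2.2 x hxP
    have h3 : c1 p0 + c2 p0 ≤ c1 x + c2 x := hx p0 hp0.1.1
    have e1 : c1 x = c1 p0 := by linarith [LinearMap.add_apply c1 c2 x]
    have e2 : c2 x = c2 p0 := by linarith
    exact ⟨⟨hxP, fun y hy => e1 ▸ hp0.1.2 y hy⟩, hxP, fun y hy => e2 ▸ hp0.2.2 y hy⟩

/-- Core weight lemma: if `z` is in a face `F` of `P` and is a convex combination of
points of `P`, then the points outside `F` get zero weight. -/
theorem wzero {P F : Set E} (hF : IsFace P F) {t : Finset E} {w : E → ℝ}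
    (hw0 : ∀ y ∈ t, 0 ≤ w y) (hw1 : ∑ y ∈ t, w y = 1)
    {z : E} (hz : z ∈ F) (hzt : z = ∑ y ∈ t, w y • y)
    (hyP : ∀ y ∈ t, y ∈ P) {y0 : E} (hy0 : y0 ∈ t) (hy0F : y0 ∉ F) : w y0 = 0 := by
  obtain ⟨-, c, rfl⟩ := hF
  have hzmax : ∀ y ∈ P, c y ≤ c z := hz.2
  have hcz : c z = ∑ y ∈ t, w y * c y := by
    rw [hzt, map_sum]
    simp [map_smul, smul_eq_mul]
  have hle : ∀ y ∈ t, c y ≤ c z := fun y hy => hzmax y (hyP y hy)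
  have hstrict : c y0 < c z := by
    have : ¬ (y0 ∈ P ∧ ∀ y ∈ P, c y ≤ c y0) := hy0F
    push_neg at this
    obtain ⟨q, hq, hq2⟩ := this (hyP y0 hy0)
    exact lt_of_lt_of_le hq2 (hzmax q hq)
  have hsum0 : ∑ y ∈ t, w y * (c z - c y) = 0 := by
    have : ∑ y ∈ t, w y * (c z - c y) = (∑ y ∈ t, w y) * c z - ∑ y ∈ t, w y * c y := by
      rw [Finset.sum_mul, ← Finset.sum_sub_distrib]
      congr 1
      ext y
      ring
    rw [this, hw1, one_mul, ← hcz, sub_self]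
  have hterm : ∀ y ∈ t, 0 ≤ w y * (c z - c y) := fun y hy =>
    mul_nonneg (hw0 y hy) (sub_nonneg.mpr (hle y hy))
  have h0 := (Finset.sum_eq_zero_iff_of_nonneg hterm).mp hsum0 y0 hy0
  rcases mul_eq_zero.mp h0 with h | h
  · exact h
  · exfalso; have := sub_pos.mpr hstrict; rw [h] at this; exact lt_irrefl 0 this

theorem hull_rep {t : Finset E} {z : E} (hzt : z ∈ convexHull ℝ (t : Set E)) :
    ∃ w : E → ℝ, (∀ y ∈ t, 0 ≤ w y) ∧ ∑ y ∈ t, w y = 1 ∧ z = ∑ y ∈ t, w y • y := by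
  rw [Finset.convexHull_eq] at hzt
  obtain ⟨w, hw0, hw1, hcm⟩ := hzt
  refine ⟨w, hw0, hw1, ?_⟩
  rw [← hcm, Finset.centerMass, hw1, inv_one, one_smul]
  simp

theorem kill {P F : Set E} (hF : IsFace P F) {t : Finset E} {z : E} (hz : z ∈ F)
    (hzt : z ∈ convexHull ℝ (t : Set E)) (hy : ∀ y ∈ t, y ∈ P ∧ y ∉ F) : False := by
  obtain ⟨w, hw0, hw1, hrep⟩ := hull_rep hzt
  have : ∀ y ∈ t, w y = 0 := fun y hyt =>
    wzero hF hw0 hw1 hz hrep (fun y hy' => (hy y hy').1) hyt (hy y hyt).2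
  rw [Finset.sum_eq_zero this] at hw1
  exact zero_ne_one hw1

theorem pinch {P F : Set E} (hF : IsFace P F) {t : Finset E} {z p0 : E} (hz : z ∈ F)
    (hzt : z ∈ convexHull ℝ (t : Set E)) (hyP : ∀ y ∈ t, y ∈ P)
    (hout : ∀ y ∈ t, y ≠ p0 → y ∉ F) : z = p0 := by
  obtain ⟨w, hw0, hw1, hrep⟩ := hull_rep hzt
  have hz0 : ∀ y ∈ t, y ≠ p0 → w y = 0 := fun y hyt hy =>
    wzero hF hw0 hw1 hz hrep hyP hyt (hout y hyt hy)
  by_cases hp0 : p0 ∈ t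
  · have hwp0 : w p0 = 1 := by
      rw [← hw1]
      exact (Finset.sum_eq_single p0 (fun y hy hne => hz0 y hy hne) (fun h => absurd hp0 h)).symm
    rw [hrep]
    rw [Finset.sum_eq_single p0 (fun y hy hne => by rw [hz0 y hy hne, zero_smul])
      (fun h => absurd hp0 h), hwp0, one_smul]
  · exfalso
    have : ∀ y ∈ t, w y = 0 := fun y hy => hz0 y hy (fun h => hp0 (h ▸ hy))
    rw [Finset.sum_eq_zero this] at hw1
    exact zero_ne_one hw1

theorem polyDim_mono [FiniteDimensional ℝ E] {s t : Set E} (h : s ⊆ t) :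
    polyDim s ≤ polyDim t := by
  unfold polyDim
  rw [direction_affineSpan, direction_affineSpan]
  exact Submodule.finrank_mono (vectorSpan_mono ℝ h)

/-! ### Faces of the product of simplices -/

variable {r : ℕ} {n : Fin r → ℕ}

theorem mem_prodSimplex {x : (i : Fin r) → Fin (n i + 1) → ℝ} :
    x ∈ prodSimplex n ↔ ∀ i, (∀ j, 0 ≤ x i j) ∧ ∑ j, x i j = 1 := by
  simp [prodSimplex, Set.mem_pi, stdSimplex, Set.mem_setOf_eq]

/-- A vertex of the product of simplices, given by a selection of one vertex per factor. -/
def vtx (s : ∀ i, Fin (n i + 1)) : (i : Fin r) → Fin (n i + 1) → ℝ :=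
  fun i j => if j = s i then 1 else 0

theorem vtx_mem (s : ∀ i, Fin (n i + 1)) : vtx s ∈ prodSimplex n := by
  rw [mem_prodSimplex]
  intro i
  constructor
  · intro j; unfold vtx; split <;> norm_num
  · simp [vtx]

/-- The face of the product of simplices given by a "pattern" of allowed vertices. -/
def pat (T : ∀ i, Finset (Fin (n i + 1))) : Set ((i : Fin r) → Fin (n i + 1) → ℝ) :=
  {x ∈ prodSimplex n | ∀ i, ∀ j ∉ T i, x i j = 0}

theorem pat_subset (T : ∀ i, Finset (Fin (n i + 1))) : pat T ⊆ prodSimplex n :=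
  fun _ hx => hx.1

theorem vtx_mem_pat {s : ∀ i, Fin (n i + 1)} {T : ∀ i, Finset (Fin (n i + 1))}
    (h : ∀ i, s i ∈ T i) : vtx s ∈ pat T := by
  refine ⟨vtx_mem s, fun i j hj => ?_⟩
  unfold vtx
  split
  · next heq => exact absurd (heq ▸ h i) hj
  · rfl

theorem vtx_notMem_pat {s : ∀ i, Fin (n i + 1)} {T : ∀ i, Finset (Fin (n i + 1))}
    {i : Fin r} (h : s i ∉ T i) : vtx s ∉ pat T := by
  intro hmem
  have := hmem.2 i (s i) h
  simp [vtx] at this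

theorem pat_single (s : ∀ i, Fin (n i + 1)) :
    pat (fun i => {s i}) = {vtx s} := by
  apply Subset.antisymm
  · intro x hx
    obtain ⟨hxΔ, hsupp⟩ := hx
    rw [mem_prodSimplex] at hxΔ
    have hx1 : ∀ i, x i (s i) = 1 := by
      intro i
      have := (hxΔ i).2
      rwa [Finset.sum_eq_single (s i) (fun j _ hj => hsupp i j (by simpa using hj))
        (fun h => absurd (Finset.mem_univ _) h)] at this
    have : x = vtx s := by
      funext i j
      by_cases hj : j = s i
      · rw [hj, hx1 i]; simp [vtx]
      · rw [hsupp i j (by simpa using hj)]; simp [vtx, hj]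
    simp [this]
  · intro x hx
    rw [mem_singleton_iff] at hx
    subst hx
    exact vtx_mem_pat (fun i => Finset.mem_singleton_self _)

/-- The linear functional exposing the face `pat T`. -/
noncomputable def patFun (T : ∀ i, Finset (Fin (n i + 1))) :
    ((i : Fin r) → Fin (n i + 1) → ℝ) →ₗ[ℝ] ℝ :=
  ∑ i : Fin r, ∑ j ∈ T i,
    ((LinearMap.proj j : (Fin (n i + 1) → ℝ) →ₗ[ℝ] ℝ).comp
      (LinearMap.proj (φ := fun i : Fin r => Fin (n i + 1) → ℝ) i))

theorem patFun_apply (T : ∀ i, Finset (Fin (n i + 1))) (x : (i : Fin r) → Fin (n i + 1) → ℝ) :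
    patFun T x = ∑ i : Fin r, ∑ j ∈ T i, x i j := by
  simp [patFun, LinearMap.sum_apply]

theorem patFun_le {T : ∀ i, Finset (Fin (n i + 1))} {x : (i : Fin r) → Fin (n i + 1) → ℝ}
    (hx : x ∈ prodSimplex n) : patFun T x ≤ r := by
  rw [mem_prodSimplex] at hx
  rw [patFun_apply]
  calc ∑ i : Fin r, ∑ j ∈ T i, x i j ≤ ∑ i : Fin r, (1 : ℝ) := by
        apply Finset.sum_le_sum
        intro i _
        calc ∑ j ∈ T i, x i j ≤ ∑ j, x i j :=
              Finset.sum_le_sum_of_subset_of_nonneg (Finset.subset_univ _)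
                (fun j _ _ => (hx i).1 j)
        _ = 1 := (hx i).2
  _ = r := by simp

theorem patFun_eq_iff {T : ∀ i, Finset (Fin (n i + 1))} {x : (i : Fin r) → Fin (n i + 1) → ℝ}
    (hx : x ∈ prodSimplex n) : patFun T x = r ↔ x ∈ pat T := by
  have hΔ := hx
  rw [mem_prodSimplex] at hx
  constructor
  · intro heq
    refine ⟨hΔ, ?_⟩
    have hle : ∀ i : Fin r, ∑ j ∈ T i, x i j ≤ 1 := by
      intro i
      calc ∑ j ∈ T i, x i j ≤ ∑ j, x i j :=
            Finset.sum_le_sum_of_subset_of_nonneg (Finset.subset_univ _)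
              (fun j _ _ => (hx i).1 j)
      _ = 1 := (hx i).2
    have heach : ∀ i : Fin r, ∑ j ∈ T i, x i j = 1 := by
      by_contra hc
      push_neg at hc
      obtain ⟨i0, hi0⟩ := hc
      have hlt : ∑ j ∈ T i0, x i0 j < 1 := lt_of_le_of_ne (hle i0) hi0
      have : patFun T x < r := by
        rw [patFun_apply]
        calc ∑ i : Fin r, ∑ j ∈ T i, x i j < ∑ i : Fin r, (1:ℝ) :=
              Finset.sum_lt_sum (fun i _ => hle i) ⟨i0, Finset.mem_univ _, hlt⟩
        _ = r := by simp
      rw [heq] at this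
      exact lt_irrefl _ this
    intro i j hj
    have hzero : ∑ j ∈ Finset.univ \ T i, x i j = 0 := by
      have := Finset.sum_sdiff (Finset.subset_univ (T i)) (f := fun j => x i j)
      rw [heach i, (hx i).2] at this
      linarith
    exact (Finset.sum_eq_zero_iff_of_nonneg
      (fun j _ => (hx i).1 j)).mp hzero j (by simp [hj])
  · intro hpat
    rw [patFun_apply]
    have : ∀ i : Fin r, ∑ j ∈ T i, x i j = 1 := by
      intro i
      rw [← (hx i).2]
      apply Finset.sum_subset (Finset.subset_univ _)
      intro j _ hj
      exact hpat.2 i j hj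
    simp [this]

theorem pat_isFace {T : ∀ i, Finset (Fin (n i + 1))} (hT : ∀ i, (T i).Nonempty) :
    IsFace (prodSimplex n) (pat T) := by
  classical
  set s0 : ∀ i, Fin (n i + 1) := fun i => (hT i).choose with hs0
  have hs0T : ∀ i, s0 i ∈ T i := fun i => (hT i).choose_spec
  have hv0 : vtx s0 ∈ pat T := vtx_mem_pat hs0T
  refine ⟨⟨vtx s0, hv0⟩, patFun T, ?_⟩
  apply Subset.antisymm
  · intro x hx
    refine ⟨hx.1, fun y hy => ?_⟩
    rw [(patFun_eq_iff hx.1).mpr hx]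
    exact patFun_le hy
  · intro x hx
    obtain ⟨hxΔ, hxmax⟩ := hx
    rw [← patFun_eq_iff hxΔ]
    have h1 : patFun T (vtx s0) ≤ patFun T x := hxmax _ (vtx_mem s0)
    have h2 : patFun T (vtx s0) = r := (patFun_eq_iff (vtx_mem s0)).mpr hv0
    have h3 := patFun_le (T := T) hxΔ
    linarith

theorem pat_dim {T : ∀ i, Finset (Fin (n i + 1))} (hT : ∀ i, (T i).Nonempty)
    {b : ℕ} (hb : ∑ i, (T i).card ≤ b + r) : polyDim (pat T) ≤ b := by
  classical
  set s0 : ∀ i, Fin (n i + 1) := fun i => (hT i).choose with hs0def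
  have hs0T : ∀ i, s0 i ∈ T i := fun i => (hT i).choose_spec
  set G : Finset (Σ i : Fin r, Fin (n i + 1)) :=
    Finset.univ.sigma (fun i => (T i).erase (s0 i)) with hGdef
  set D : (Σ i : Fin r, Fin (n i + 1)) → ((i : Fin r) → Fin (n i + 1) → ℝ) := fun p i' j' =>
    (if (⟨i', j'⟩ : Σ i, Fin (n i + 1)) = p then (1:ℝ) else 0)
    - (if (⟨i', j'⟩ : Σ i, Fin (n i + 1)) = ⟨p.1, s0 p.1⟩ then (1:ℝ) else 0) with hDdef
  have hrep : ∀ x ∈ pat T, ∀ y ∈ pat T,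
      x - y = ∑ p ∈ G, (x p.1 p.2 - y p.1 p.2) • D p := by
    intro x hx y hy
    have hsum : ∀ i, ∑ j ∈ T i, (x i j - y i j) = 0 := by
      intro i
      have hxs : ∑ j ∈ T i, x i j = 1 := by
        rw [← (mem_prodSimplex.mp hx.1 i).2]
        exact Finset.sum_subset (Finset.subset_univ _) (fun j _ hj => hx.2 i j hj)
      have hys : ∑ j ∈ T i, y i j = 1 := by
        rw [← (mem_prodSimplex.mp hy.1 i).2]
        exact Finset.sum_subset (Finset.subset_univ _) (fun j _ hj => hy.2 i j hj)
      rw [Finset.sum_sub_distrib, hxs, hys, sub_self]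
    funext i j
    simp only [Pi.sub_apply]
    have hev : (∑ p ∈ G, (x p.1 p.2 - y p.1 p.2) • D p) i j
        = ∑ p ∈ G, (x p.1 p.2 - y p.1 p.2) * D p i j := by
      rw [Finset.sum_apply, Finset.sum_apply]
      simp [smul_eq_mul]
    have hsplit : ∀ p : (Σ i : Fin r, Fin (n i + 1)),
        (x p.1 p.2 - y p.1 p.2) * D p i j
        = (if (⟨i, j⟩ : Σ i, Fin (n i + 1)) = p then (x p.1 p.2 - y p.1 p.2) else 0)
          - (if (⟨i, j⟩ : Σ i, Fin (n i + 1)) = ⟨p.1, s0 p.1⟩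
              then (x p.1 p.2 - y p.1 p.2) else 0) := by
      intro p
      rw [hDdef]
      simp only [mul_sub, mul_ite, mul_one, mul_zero]
    have hS1 : ∑ p ∈ G, (if (⟨i, j⟩ : Σ i, Fin (n i + 1)) = p
          then (x p.1 p.2 - y p.1 p.2) else 0)
        = if (⟨i, j⟩ : Σ i, Fin (n i + 1)) ∈ G then x i j - y i j else 0 := by
      rw [Finset.sum_ite_eq]
    have hS2 : ∑ p ∈ G, (if (⟨i, j⟩ : Σ i, Fin (n i + 1)) = ⟨p.1, s0 p.1⟩
          then (x p.1 p.2 - y p.1 p.2) else 0)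
        = if j = s0 i then ∑ j' ∈ (T i).erase (s0 i), (x i j' - y i j') else 0 := by
      rw [hGdef, Finset.sum_sigma]
      rw [Finset.sum_eq_single i]
      · by_cases hjs : j = s0 i
        · subst hjs
          simp
        · rw [if_neg hjs]
          apply Finset.sum_eq_zero
          intro j' _
          rw [if_neg]
          intro h
          exact hjs (by simpa using h)
      · intro i' _ hne
        apply Finset.sum_eq_zero
        intro j' _
        rw [if_neg]
        intro h
        exact hne (congrArg Sigma.fst h).symm
      · intro h
        exact absurd (Finset.mem_univ i) h
    rw [hev]
    rw [Finset.sum_congr rfl (fun p _ => hsplit p), Finset.sum_sub_distrib, hS1, hS2]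
    by_cases hjT : j ∈ T i
    · by_cases hjs : j = s0 i
      · subst hjs
        have hG : (⟨i, s0 i⟩ : Σ i, Fin (n i + 1)) ∉ G := by
          rw [hGdef]
          simp [Finset.mem_sigma, Finset.mem_erase]
        rw [if_neg hG, if_pos rfl]
        have h6 := Finset.add_sum_erase (T i) (fun j' => x i j' - y i j') (hs0T i)
        rw [hsum i] at h6
        have h7 : x i (s0 i) - y i (s0 i) + ∑ j' ∈ (T i).erase (s0 i), (x i j' - y i j') = 0 := h6
        linarith
      · have hG : (⟨i, j⟩ : Σ i, Fin (n i + 1)) ∈ G := by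
          rw [hGdef]
          simp [Finset.mem_sigma, Finset.mem_erase, hjs, hjT]
        rw [if_pos hG, if_neg hjs, sub_zero]
    · have hjs : j ≠ s0 i := fun h => hjT (h ▸ hs0T i)
      have hG : (⟨i, j⟩ : Σ i, Fin (n i + 1)) ∉ G := by
        rw [hGdef]
        simp [Finset.mem_sigma, Finset.mem_erase, hjT]
      rw [if_neg hG, if_neg hjs, hx.2 i j hjT, hy.2 i j hjT]
  have hspan : vectorSpan ℝ (pat T) ≤ Submodule.span ℝ
      ((G.image D : Finset ((i : Fin r) → Fin (n i + 1) → ℝ)) :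
        Set ((i : Fin r) → Fin (n i + 1) → ℝ)) := by
    rw [vectorSpan_def]
    apply Submodule.span_le.mpr
    rintro v ⟨x, hx, y, hy, rfl⟩
    show x - y ∈ _
    rw [hrep x hx y hy]
    apply Submodule.sum_smul_mem
    intro p hp
    apply Submodule.subset_span
    rw [Finset.coe_image]
    exact ⟨p, hp, rfl⟩
  have h1 : polyDim (pat T) ≤ Module.finrank ℝ (Submodule.span ℝ
      ((G.image D : Finset ((i : Fin r) → Fin (n i + 1) → ℝ)) :
        Set ((i : Fin r) → Fin (n i + 1) → ℝ))) := by
    unfold polyDim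
    rw [direction_affineSpan]
    exact Submodule.finrank_mono hspan
  have h2 : Module.finrank ℝ (Submodule.span ℝ
      ((G.image D : Finset ((i : Fin r) → Fin (n i + 1) → ℝ)) :
        Set ((i : Fin r) → Fin (n i + 1) → ℝ))) ≤ (G.image D).card :=
    finrank_span_finset_le_card (G.image D)
  have h3 : (G.image D).card ≤ G.card := Finset.card_image_le
  have h4 : G.card = ∑ i, ((T i).card - 1) := by
    rw [hGdef, Finset.card_sigma]
    exact Finset.sum_congr rfl (fun i _ => Finset.card_erase_of_mem (hs0T i))
  have h5 : ∑ i, ((T i).card - 1) ≤ b := by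
    have he : ∑ i, ((T i).card - 1) + r = ∑ i, (T i).card := by
      have hc1 : ∀ i : Fin r, (T i).card - 1 + 1 = (T i).card := fun i =>
        Nat.sub_add_cancel (Finset.card_pos.mpr (hT i))
      calc ∑ i, ((T i).card - 1) + r = ∑ i : Fin r, (((T i).card - 1) + 1) := by
            rw [Finset.sum_add_distrib]
            simp
      _ = ∑ i, (T i).card := Finset.sum_congr rfl (fun i _ => hc1 i)
    omega
  omega

/-! ### Labels for the chosen vertex family -/

/-- Labels for the `N+1` chosen vertices: the origin, plus one vertex per factor and level. -/
abbrev Lbl (r : ℕ) (n : Fin r → ℕ) := Option ((i : Fin r) × Fin (n i))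

/-- The vertex selection associated to a label. -/
def lbl : Lbl r n → ∀ i : Fin r, Fin (n i + 1)
  | none => fun _ => 0
  | some p => Function.update (fun _ => 0) p.1 p.2.succ

theorem lbl_none_apply (i : Fin r) : lbl (none : Lbl r n) i = 0 := rfl

theorem lbl_some (p : (i : Fin r) × Fin (n i)) :
    lbl (some p) = Function.update (fun i : Fin r => (0 : Fin (n i + 1))) p.1 p.2.succ := rfl

theorem lbl_some_self (p : (i : Fin r) × Fin (n i)) : lbl (some p) p.1 = p.2.succ := by
  rw [lbl_some]
  exact Function.update_self _ _ _

theorem lbl_some_ne {p : (i : Fin r) × Fin (n i)} {i : Fin r} (h : i ≠ p.1) :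
    lbl (some p) i = 0 := by
  rw [lbl_some]
  exact Function.update_of_ne h _ _

/-- The slice of a label set in factor `i`. -/
def slc (S : Finset (Lbl r n)) (i : Fin r) : Finset (Fin (n i)) :=
  Finset.univ.filter fun l => (some ⟨i, l⟩ : Lbl r n) ∈ S

/-- The vertex pattern spanned by a label set (always containing the origin). -/
def Tset (S : Finset (Lbl r n)) : ∀ i : Fin r, Finset (Fin (n i + 1)) := fun i =>
  insert 0 ((slc S i).image Fin.succ)

theorem Tset_nonempty (S : Finset (Lbl r n)) (i : Fin r) : (Tset S i).Nonempty :=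
  ⟨0, Finset.mem_insert_self _ _⟩

theorem Tset_card (S : Finset (Lbl r n)) :
    ∑ i, (Tset S i).card ≤ (∑ i, (slc S i).card) + r := by
  have h : ∀ i : Fin r, (Tset S i).card ≤ (slc S i).card + 1 := by
    intro i
    calc (Tset S i).card ≤ ((slc S i).image Fin.succ).card + 1 := Finset.card_insert_le _ _
    _ ≤ (slc S i).card + 1 := by
        have := Finset.card_image_le (s := slc S i) (f := Fin.succ)
        omega
  calc ∑ i, (Tset S i).card ≤ ∑ i : Fin r, ((slc S i).card + 1) :=
        Finset.sum_le_sum (fun i _ => h i)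
  _ = (∑ i, (slc S i).card) + r := by rw [Finset.sum_add_distrib]; simp

theorem slc_compl (S : Finset (Lbl r n)) (i : Fin r) :
    (slc S i).card + (slc Sᶜ i).card = n i := by
  have h : slc Sᶜ i = Finset.univ.filter fun l => ¬((some ⟨i, l⟩ : Lbl r n) ∈ S) := by
    apply Finset.filter_congr
    intro l _
    simp [Finset.mem_compl]
  rw [slc, h, Finset.card_filter_add_card_filter_not]
  simp

theorem lbl_mem_Tset {S : Finset (Lbl r n)} {m : Lbl r n} (h : m = none ∨ m ∈ S) (i : Fin r) :
    lbl m i ∈ Tset S i := by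
  match m with
  | none => exact Finset.mem_insert_self _ _
  | some p =>
    have hp : some p ∈ S := by
      rcases h with h | h
      · exact absurd h (by simp)
      · exact h
    by_cases hi : i = p.1
    · subst hi
      rw [lbl_some_self]
      exact Finset.mem_insert_of_mem
        (Finset.mem_image_of_mem _ (Finset.mem_filter.mpr ⟨Finset.mem_univ _, hp⟩))
    · rw [lbl_some_ne hi]
      exact Finset.mem_insert_self _ _

theorem lbl_notMem_Tset {S : Finset (Lbl r n)} {p : (i : Fin r) × Fin (n i)}
    (h : (some p : Lbl r n) ∉ S) : lbl (some p) p.1 ∉ Tset S p.1 := by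
  rw [lbl_some_self]
  intro hmem
  rcases Finset.mem_insert.mp hmem with h0 | him
  · exact Fin.succ_ne_zero _ h0
  · obtain ⟨l, hl, heq⟩ := Finset.mem_image.mp him
    have hlp : l = p.2 := Fin.succ_injective _ heq
    subst hlp
    exact h (Finset.mem_filter.mp hl).2

theorem vtx_lbl_ne (p : (i : Fin r) × Fin (n i)) :
    vtx (lbl (some p)) ≠ vtx (lbl none) := by
  intro h
  have h2 := congrFun (congrFun h p.1) (p.2.succ)
  rw [vtx, vtx] at h2
  rw [lbl_some_self, lbl_none_apply, if_pos rfl, if_neg (Fin.succ_ne_zero _)] at h2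
  exact one_ne_zero h2

end S14

/-- Theorem `topObstr-large-k`. If `k ≥ ⌊(Σ_i n_i)/2⌋`, then every
`(k,n̄)`-PPSN polytope has dimension at least `Σ_i n_i`. -/
theorem statement14 (k r : ℕ) (hr : 1 ≤ r) (n : Fin r → ℕ) (hn : ∀ i, 1 ≤ n i)
    (hk : (∑ i, n i) / 2 ≤ k) :
    ∀ (d : ℕ) (P : Set (Fin d → ℝ)), IsPPSN k n P → ∑ i, n i ≤ polyDim P := by
  classical
  intro d P hPP
  obtain ⟨⟨hPoly, ⟨iso⟩⟩, -⟩ := hPP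
  obtain ⟨V, hV⟩ := hPoly
  have hPconv : Convex ℝ P := hV ▸ convex_convexHull ℝ _
  set Φ : skel k (prodSimplex n) ≃o skel k P := iso.symm with hΦ
  -- the vertex faces of the product of simplices, as elements of the skeleton
  have vfskel : ∀ m : S14.Lbl r n,
      S14.pat (fun i => {S14.lbl m i}) ∈ skel k (prodSimplex n) := by
    intro m
    refine ⟨S14.pat_isFace (fun i => ⟨_, Finset.mem_singleton_self _⟩), ?_⟩
    have := S14.pat_dim (n := n) (T := fun i => {S14.lbl m i})
      (fun i => ⟨_, Finset.mem_singleton_self _⟩) (b := k) (by simp)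
    exact this
  set vfel : S14.Lbl r n → skel k (prodSimplex n) :=
    fun m => ⟨S14.pat (fun i => {S14.lbl m i}), vfskel m⟩ with hvfel
  -- choice of points of P in the corresponding faces
  have hVFface : ∀ m : S14.Lbl r n, IsFace P ((Φ (vfel m) : skel k P) : Set (Fin d → ℝ)) :=
    fun m => (Φ (vfel m)).2.1
  have hVFpts : ∀ m : S14.Lbl r n, ∃ x, x ∈ ((Φ (vfel m) : skel k P) : Set (Fin d → ℝ)) :=
    fun m => (hVFface m).1
  choose u hu using hVFpts
  have huP : ∀ m, u m ∈ P := fun m => S14.face_subset (hVFface m) (hu m)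
  -- monotone transport of the order isomorphism
  have Φmono : ∀ (X Y : skel k (prodSimplex n)), (X : Set ((i : Fin r) → Fin (n i + 1) → ℝ)) ⊆ (Y : Set ((i : Fin r) → Fin (n i + 1) → ℝ)) →
      ((Φ X : skel k P) : Set (Fin d → ℝ)) ⊆ ((Φ Y : skel k P) : Set (Fin d → ℝ)) := by
    intro X Y h
    exact Φ.le_iff_le.mpr h
  -- disjointness transport
  have Φdisj : ∀ (m : S14.Lbl r n) (X : skel k (prodSimplex n)),
      S14.vtx (S14.lbl m) ∉ (X : Set ((i : Fin r) → Fin (n i + 1) → ℝ)) →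
      ∀ y, y ∈ ((Φ (vfel m) : skel k P) : Set (Fin d → ℝ)) →
        y ∈ ((Φ X : skel k P) : Set (Fin d → ℝ)) → False := by
    intro m X hv y hy1 hy2
    have hne : (((Φ (vfel m) : skel k P) : Set (Fin d → ℝ))
        ∩ ((Φ X : skel k P) : Set (Fin d → ℝ))).Nonempty := ⟨y, hy1, hy2⟩
    have hface := S14.face_inter (hVFface m) ((Φ X).2.1) hne
    have hdim : polyDim (((Φ (vfel m) : skel k P) : Set (Fin d → ℝ))
        ∩ ((Φ X : skel k P) : Set (Fin d → ℝ))) ≤ k :=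
      le_trans (S14.polyDim_mono inter_subset_left) (Φ (vfel m)).2.2
    set W : skel k P := ⟨_, ⟨hface, hdim⟩⟩ with hW
    have hle1 : W ≤ Φ (vfel m) := by
      show (W : Set (Fin d → ℝ)) ⊆ _
      exact inter_subset_left
    have hle2 : W ≤ Φ X := by
      show (W : Set (Fin d → ℝ)) ⊆ _
      exact inter_subset_right
    have hW1 : Φ.symm W ≤ vfel m := by
      have h2 := Φ.symm.le_iff_le.mpr hle1
      rwa [Φ.symm_apply_apply] at h2
    have hW2 : Φ.symm W ≤ X := by
      have h2 := Φ.symm.le_iff_le.mpr hle2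
      rwa [Φ.symm_apply_apply] at h2
    obtain ⟨wpt, hwpt⟩ := ((Φ.symm W).2.1).1
    have hw1 : wpt ∈ S14.pat (fun i => {S14.lbl m i}) := hW1 hwpt
    rw [S14.pat_single, mem_singleton_iff] at hw1
    exact hv (hW2 (hw1 ▸ hwpt))
  -- the central contradiction
  have key : ∀ (A : Finset (S14.Lbl r n)), none ∈ A → ∀ z : Fin d → ℝ,
      z ∈ convexHull ℝ ((A.image u : Finset (Fin d → ℝ)) : Set (Fin d → ℝ)) →
      z ∈ convexHull ℝ ((Aᶜ.image u : Finset (Fin d → ℝ)) : Set (Fin d → ℝ)) → False := by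
    intro A hnoneA z hzA hzB
    have hcacb : (∑ i, (S14.slc A i).card) + (∑ i, (S14.slc Aᶜ i).card) = ∑ i, n i := by
      rw [← Finset.sum_add_distrib]
      exact Finset.sum_congr rfl (fun i _ => S14.slc_compl A i)
    have hk' : ∑ i, n i ≤ 2 * k + 1 := by omega
    by_cases hcase : ∑ i, (S14.slc A i).card ≤ k
    · -- capture branch: the face spanned by the `A`-side is in the skeleton
      have hskel : S14.pat (S14.Tset A) ∈ skel k (prodSimplex n) := by
        refine ⟨S14.pat_isFace (S14.Tset_nonempty A), ?_⟩
        exact S14.pat_dim (S14.Tset_nonempty A)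
          (le_trans (S14.Tset_card A) (by omega))
      set X : skel k (prodSimplex n) := ⟨S14.pat (S14.Tset A), hskel⟩ with hX
      have hsub : ∀ m ∈ A, ((vfel m : skel k (prodSimplex n)) : Set ((i : Fin r) → Fin (n i + 1) → ℝ)) ⊆ (X : Set ((i : Fin r) → Fin (n i + 1) → ℝ)) := by
        intro m hm
        show S14.pat (fun i => {S14.lbl m i}) ⊆ S14.pat (S14.Tset A)
        rw [S14.pat_single]
        intro w hw
        rw [mem_singleton_iff] at hw
        subst hw
        exact S14.vtx_mem_pat (S14.lbl_mem_Tset (Or.inr hm))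
      have hzF : z ∈ ((Φ X : skel k P) : Set (Fin d → ℝ)) := by
        apply convexHull_min ?_ (S14.face_convex hPconv ((Φ X).2.1)) hzA
        intro y hy
        rw [Finset.coe_image] at hy
        obtain ⟨m, hm, rfl⟩ := hy
        exact Φmono (vfel m) X (hsub m (by exact_mod_cast hm)) (hu m)
      refine S14.kill ((Φ X).2.1) hzF hzB ?_
      intro y hy
      rw [Finset.mem_image] at hy
      obtain ⟨m, hm, rfl⟩ := hy
      refine ⟨huP m, fun hyF => ?_⟩
      have hmA : m ∉ A := Finset.mem_compl.mp hm
      match m with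
      | none => exact hmA hnoneA
      | some p =>
        have hvnot : S14.vtx (S14.lbl (some p)) ∉ (X : Set ((i : Fin r) → Fin (n i + 1) → ℝ)) :=
          S14.vtx_notMem_pat (S14.lbl_notMem_Tset hmA)
        exact Φdisj (some p) X hvnot (u (some p)) (hu (some p)) hyF
    · -- pinch branch
      push_neg at hcase
      have hcB : ∑ i, (S14.slc Aᶜ i).card ≤ k := by omega
      have hskel : S14.pat (S14.Tset Aᶜ) ∈ skel k (prodSimplex n) := by
        refine ⟨S14.pat_isFace (S14.Tset_nonempty Aᶜ), ?_⟩
        exact S14.pat_dim (S14.Tset_nonempty Aᶜ)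
          (le_trans (S14.Tset_card Aᶜ) (by omega))
      set Y : skel k (prodSimplex n) := ⟨S14.pat (S14.Tset Aᶜ), hskel⟩ with hY
      have hzFY : z ∈ ((Φ Y : skel k P) : Set (Fin d → ℝ)) := by
        apply convexHull_min ?_ (S14.face_convex hPconv ((Φ Y).2.1)) hzB
        intro y hy
        rw [Finset.coe_image] at hy
        obtain ⟨m, hm, rfl⟩ := hy
        have hsub : ((vfel m : skel k (prodSimplex n)) : Set ((i : Fin r) → Fin (n i + 1) → ℝ)) ⊆ (Y : Set ((i : Fin r) → Fin (n i + 1) → ℝ)) := by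
          show S14.pat (fun i => {S14.lbl m i}) ⊆ S14.pat (S14.Tset Aᶜ)
          rw [S14.pat_single]
          intro w hw
          rw [mem_singleton_iff] at hw
          subst hw
          exact S14.vtx_mem_pat (S14.lbl_mem_Tset (Or.inr (by exact_mod_cast hm)))
        exact Φmono (vfel m) Y hsub (hu m)
      have hzeq : z = u none := by
        refine S14.pinch ((Φ Y).2.1) hzFY hzA ?_ ?_
        · intro y hy
          rw [Finset.mem_image] at hy
          obtain ⟨m, hm, rfl⟩ := hy
          exact huP m
        · intro y hy hne
          rw [Finset.mem_image] at hy
          obtain ⟨m, hm, rfl⟩ := hy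
          intro hyF
          match m with
          | none => exact hne rfl
          | some p =>
            have hmB : (some p : S14.Lbl r n) ∉ Aᶜ := by
              rw [Finset.mem_compl]
              intro hcon
              exact hcon hm
            have hvnot : S14.vtx (S14.lbl (some p)) ∉ (Y : Set ((i : Fin r) → Fin (n i + 1) → ℝ)) :=
              S14.vtx_notMem_pat (S14.lbl_notMem_Tset hmB)
            exact Φdisj (some p) Y hvnot (u (some p)) (hu (some p)) hyF
      -- final kill with the vertex face of `none`
      have hzVF : z ∈ ((Φ (vfel none) : skel k P) : Set (Fin d → ℝ)) := by
        rw [hzeq]; exact hu none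
      refine S14.kill (hVFface none) hzVF hzB ?_
      intro y hy
      rw [Finset.mem_image] at hy
      obtain ⟨m, hm, rfl⟩ := hy
      refine ⟨huP m, fun hyF => ?_⟩
      have hmA : m ∉ A := Finset.mem_compl.mp hm
      match m with
      | none => exact hmA hnoneA
      | some p =>
        have hvnot : S14.vtx (S14.lbl (some p)) ∉ ((vfel none : skel k (prodSimplex n)) : Set ((i : Fin r) → Fin (n i + 1) → ℝ)) := by
          show S14.vtx (S14.lbl (some p)) ∉ S14.pat (fun i => {S14.lbl none i})
          rw [S14.pat_single]
          rw [mem_singleton_iff]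
          exact S14.vtx_lbl_ne p
        exact Φdisj (some p) (vfel none) hvnot (u (some p)) (hu (some p)) hyF
  -- main dichotomy
  by_cases hind : AffineIndependent ℝ u
  · have hcard : Fintype.card (S14.Lbl r n) = (∑ i, n i) + 1 := by
      simp [S14.Lbl]
    have h1 := hind.finrank_vectorSpan hcard
    have hsub : Set.range u ⊆ P := by
      rintro x ⟨m, rfl⟩
      exact huP m
    have h3 := Submodule.finrank_mono (vectorSpan_mono ℝ hsub)
    rw [h1] at h3
    show (∑ i, n i) ≤ polyDim P
    unfold polyDim
    rw [direction_affineSpan]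
    exact h3
  · exfalso
    obtain ⟨I, z, hz1, hz2⟩ := Convex.radon_partition hind
    set A0 : Finset (S14.Lbl r n) := I.toFinset with hA0
    have hIA : (A0 : Set (S14.Lbl r n)) = I := Set.coe_toFinset I
    have hzA : z ∈ convexHull ℝ ((A0.image u : Finset (Fin d → ℝ)) : Set (Fin d → ℝ)) := by
      rw [Finset.coe_image, hIA]
      exact hz1
    have hzB : z ∈ convexHull ℝ ((A0ᶜ.image u : Finset (Fin d → ℝ)) : Set (Fin d → ℝ)) := by
      rw [Finset.coe_image, Finset.coe_compl, hIA]
      exact hz2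
    by_cases hnone : none ∈ A0
    · exact key A0 hnone z hzA hzB
    · have hnone' : (none : S14.Lbl r n) ∈ A0ᶜ := Finset.mem_compl.mpr hnone
      have hcc : A0ᶜᶜ = A0 := compl_compl A0
      refine key A0ᶜ hnone' z hzB ?_
      rw [hcc]
      exact hzA
end

section
/- Fix integers k ≥ 0, r ≥ 1 and n_1,…,n_r ≥ 1, and let E and 𝒵 be as defined. Let k_1,…,k_r be nonnegative integers with Σ_{i∈[r]} k_i = k, such that k_i = 0 whenever n_i = 1 and 2k_i ≤ n_i − 2 whenever n_i ≥ 2. Set χ_i := 1 if n_i = 1 and χ_i := n_i − 2k_i − 1 if n_i ≥ 2. Then the Kneser graph KG(𝒵) admits a proper vertex coloring with Σ_{i∈[r]} χ_i colors, i.e. its chromatic number is at most Σ_{i∈[r]} χ_i. -/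
open Finset

variable {r : ℕ} {n : Fin r → ℕ}

/-- The set of values `x.2.val` for `x ∈ G` with `x.1 = i`. -/
def vals (G : Finset ((i : Fin r) × Fin (n i + 1))) (i : Fin r) : Finset ℕ :=
  (G.filter fun x => x.1 = i).image fun x => x.2.1

lemma mem_vals_iff (G : Finset ((i : Fin r) × Fin (n i + 1))) (i : Fin r) (v : ℕ) :
    v ∈ vals G i ↔ ∃ hv : v < n i + 1, ⟨i, ⟨v, hv⟩⟩ ∈ G := by
  constructor
  · rintro hm
    simp only [vals, mem_image, mem_filter] at hm
    obtain ⟨⟨a, b⟩, ⟨hxG, hxi⟩, hxv⟩ := hm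
    simp only at hxi hxv
    subst hxi
    have hv : v < n a + 1 := by have := b.isLt; omega
    refine ⟨hv, ?_⟩
    have : b = ⟨v, hv⟩ := Fin.ext hxv
    rwa [← this]
  · rintro ⟨hv, hG⟩
    simp only [vals, mem_image, mem_filter]
    exact ⟨⟨i, ⟨v, hv⟩⟩, ⟨hG, rfl⟩, rfl⟩

lemma vals_card (G : Finset ((i : Fin r) × Fin (n i + 1))) (i : Fin r) :
    (vals G i).card = compCard G i := by
  rw [vals, compCard, Finset.card_image_of_injOn]
  rintro ⟨a, b⟩ hx ⟨c, d⟩ hy hxy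
  simp only [mem_coe, mem_filter] at hx hy
  simp only at hxy
  obtain ⟨-, ha⟩ := hx
  obtain ⟨-, hc⟩ := hy
  have ha2 : a = i := ha
  have hc2 : c = i := hc
  subst ha2
  subst hc2
  have hbd : b = d := Fin.ext hxy
  rw [hbd]

lemma exists_big (k : ℕ) (kk : Fin r → ℕ) (hsum : ∑ i, kk i = k)
    (G : Finset ((i : Fin r) × Fin (n i + 1))) (hG : memZ k G) :
    ∃ i, kk i + 2 ≤ compCard G i := by
  by_contra h
  push_neg at h
  have hle : weight G ≤ k := by
    calc weight G ≤ ∑ i ∈ univ.filter (fun i => compCard G i ≠ 0), kk i := by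
          apply Finset.sum_le_sum
          intro i hi
          simp only [mem_filter] at hi
          have h1 := hG.1 i
          have h2 := h i
          omega
      _ ≤ ∑ i, kk i := Finset.sum_le_sum_of_subset (filter_subset _ _)
      _ = k := hsum
  rw [hG.2] at hle
  omega

lemma mval_mem (S : Finset ℕ) (h : S.Nonempty) : S.min.getD 0 ∈ S := by
  have hc : S.min.getD 0 = S.min' h := by rw [← Finset.coe_min' h]; rfl
  rw [hc]
  exact Finset.min'_mem S h

lemma mval_le (S : Finset ℕ) (h : S.Nonempty) (v : ℕ) (hv : v ∈ S) : S.min.getD 0 ≤ v := by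
  have hc : S.min.getD 0 = S.min' h := by rw [← Finset.coe_min' h]; rfl
  rw [hc]
  exact Finset.min'_le S v hv

set_option maxHeartbeats 1000000 in
/-- Given `k_1, …, k_r ≥ 0` with `Σ k_i = k`, `k_i = 0` whenever
`n_i = 1` and `2k_i ≤ n_i - 2` whenever `n_i ≥ 2`, and setting `χ_i = 1` if `n_i = 1`
and `χ_i = n_i - 2k_i - 1` otherwise, the Kneser graph on `𝒵` admits a proper coloring
with `Σ_i χ_i` colors. -/
theorem statement19 (k r : ℕ) (hr : 1 ≤ r) (n : Fin r → ℕ) (hn : ∀ i, 1 ≤ n i)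
    (kk : Fin r → ℕ) (hsum : ∑ i, kk i = k)
    (hseg : ∀ i, n i = 1 → kk i = 0)
    (hbig : ∀ i, 2 ≤ n i → 2 * kk i ≤ n i - 2) :
    ∃ col : Finset ((i : Fin r) × Fin (n i + 1)) →
        Fin (∑ i, if n i = 1 then 1 else n i - 2 * kk i - 1),
      ∀ G, memZ k G → ∀ H, memZ k H → Disjoint G H → col G ≠ col H := by
  classical
  set χ : Fin r → ℕ := fun i => if n i = 1 then 1 else n i - 2 * kk i - 1 with hχdef
  have hχpos : ∀ i, 1 ≤ χ i := by
    intro i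
    simp only [hχdef]
    split
    · omega
    · have h1 := hn i
      have h2 := hbig i (by omega)
      omega
  have hspos : 0 < ∑ i, χ i := by
    have : (univ : Finset (Fin r)).Nonempty := ⟨⟨0, hr⟩, mem_univ _⟩
    exact Finset.sum_pos (fun i _ => hχpos i) this
  obtain ⟨e⟩ : Nonempty ((Σ i : Fin r, Fin (χ i)) ≃ Fin (∑ i, χ i)) :=
    ⟨Fintype.equivFinOfCardEq (by simp only [Fintype.card_sigma, Fintype.card_fin])⟩
  have hvne : ∀ (G : Finset ((i : Fin r) × Fin (n i + 1))) (i : Fin r),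
      kk i + 2 ≤ compCard G i → (vals G i).Nonempty := by
    intro G i h
    rw [← Finset.card_pos, vals_card]
    omega
  refine ⟨fun G =>
    if h : ∃ i, kk i + 2 ≤ compCard G i then
      e ⟨Classical.choose h,
        ⟨min ((vals G (Classical.choose h)).min.getD 0) (χ (Classical.choose h) - 1),
         by have := hχpos (Classical.choose h); omega⟩⟩
    else ⟨0, hspos⟩, ?_⟩
  intro G hG H hH hdisj hcol
  have hGex := exists_big k kk hsum G hG
  have hHex := exists_big k kk hsum H hH
  dsimp only at hcol
  rw [dif_pos hGex, dif_pos hHex] at hcol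
  have hse := e.injective hcol
  have hGi : kk (Classical.choose hGex) + 2 ≤ compCard G (Classical.choose hGex) :=
    Classical.choose_spec hGex
  have hHj : kk (Classical.choose hHex) + 2 ≤ compCard H (Classical.choose hHex) :=
    Classical.choose_spec hHex
  have hfst : Classical.choose hGex = Classical.choose hHex := congrArg Sigma.fst hse
  have hval : min ((vals G (Classical.choose hGex)).min.getD 0) (χ (Classical.choose hGex) - 1)
      = min ((vals H (Classical.choose hHex)).min.getD 0) (χ (Classical.choose hHex) - 1) :=
    congrArg (fun p : (Σ i : Fin r, Fin (χ i)) => (p.2 : ℕ)) hse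
  rw [← hfst] at hHj hval
  set i := Classical.choose hGex with hidef
  set m1 := (vals G i).min.getD 0 with hm1
  set m2 := (vals H i).min.getD 0 with hm2
  have hne1 : (vals G i).Nonempty := hvne G i hGi
  have hne2 : (vals H i).Nonempty := hvne H i hHj
  have hvdisj : Disjoint (vals G i) (vals H i) := by
    rw [Finset.disjoint_left]
    intro v hvG hvH
    obtain ⟨hv, hG'⟩ := (mem_vals_iff G i v).mp hvG
    obtain ⟨hv', hH'⟩ := (mem_vals_iff H i v).mp hvH
    exact (Finset.disjoint_left.mp hdisj hG') hH'
  by_cases hc : min m1 (χ i - 1) < χ i - 1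
  · have hmm : m1 = m2 := by omega
    have h1 : m1 ∈ vals G i := mval_mem _ hne1
    have h2 : m1 ∈ vals H i := hmm ▸ mval_mem _ hne2
    exact (Finset.disjoint_left.mp hvdisj h1) h2
  · push_neg at hc
    have hm1ge : χ i - 1 ≤ m1 := by omega
    have hm2ge : χ i - 1 ≤ m2 := by omega
    have hsubG : vals G i ⊆ Finset.Icc (χ i - 1) (n i) := by
      intro v hv
      rw [Finset.mem_Icc]
      obtain ⟨hvlt, -⟩ := (mem_vals_iff G i v).mp hv
      have := mval_le _ hne1 v hv
      omega
    have hsubH : vals H i ⊆ Finset.Icc (χ i - 1) (n i) := by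
      intro v hv
      rw [Finset.mem_Icc]
      obtain ⟨hvlt, -⟩ := (mem_vals_iff H i v).mp hv
      have := mval_le _ hne2 v hv
      omega
    have hcard : (vals G i).card + (vals H i).card ≤ (Finset.Icc (χ i - 1) (n i)).card := by
      rw [← Finset.card_union_of_disjoint hvdisj]
      exact Finset.card_le_card (Finset.union_subset hsubG hsubH)
    rw [vals_card, vals_card, Nat.card_Icc] at hcard
    have hχi := hχpos i
    have hni := hn i
    by_cases h1 : n i = 1
    · have := hseg i h1
      simp only [hχdef, if_pos h1] at hcard hχi
      omega
    · have h2 := hbig i (by omega)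
      simp only [hχdef, if_neg h1] at hcard hχi
      omega
end
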